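/- arXiv:1312.3034 — 7 statements merged into one kernel-verified Lean document; each statement's English description precedes it below -/
import Mathlib

section
/- If G is a 2-uniform graph in which a largest clique has order t, then the Graph-Lagrangian of G equals (1/2)(1 - 1/t). -/
open Finset

def simplexS (n : ℕ) : Set (Fin n → ℝ) :=
  {x | (∀ i, 0 ≤ x i) ∧ ∑ i, x i = 1}

def lagPoly {n : ℕ} (E : Finset (Finset (Fin n))) (x : Fin n → ℝ) : ℝ :=
  ∑ e ∈ E, ∏ v ∈ e, x v

/-- A clique of a 2-graph: a vertex set whose pairs are all edges. -/
def IsClique2 {n : ℕ} (E : Finset (Finset (Fin n))) (W : Finset (Fin n)) : Prop :=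
  ∀ i ∈ W, ∀ j ∈ W, i ≠ j → ({i, j} : Finset (Fin n)) ∈ E

/-- Sum of products over all pairs equals ((Σx)² - Σx²)/2. -/
private lemma sum_pairs {n : ℕ} (s : Finset (Fin n)) (x : Fin n → ℝ) :
    ∑ e ∈ s.powersetCard 2, ∏ v ∈ e, x v
      = ((∑ i ∈ s, x i) ^ 2 - ∑ i ∈ s, (x i) ^ 2) / 2 := by
  induction s using Finset.induction_on with
  | empty =>
    rw [Finset.powersetCard_eq_empty.2 (by simp)]
    simp
  | @insert a s ha ih =>
    have hdisj : Disjoint (s.powersetCard 2) ((s.powersetCard 1).image (insert a)) := by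
      rw [Finset.disjoint_left]
      rintro e he hee
      rw [Finset.mem_image] at hee
      obtain ⟨f, _, rfl⟩ := hee
      exact ha ((Finset.mem_powersetCard.1 he).1 (Finset.mem_insert_self a f))
    have hinj : ∀ e ∈ s.powersetCard 1, ∀ f ∈ s.powersetCard 1,
        insert a e = insert a f → e = f := by
      intro e he f hf hef
      have hae : a ∉ e := fun h => ha ((Finset.mem_powersetCard.1 he).1 h)
      have haf : a ∉ f := fun h => ha ((Finset.mem_powersetCard.1 hf).1 h)
      rw [← Finset.erase_insert hae, hef, Finset.erase_insert haf]
    have h1 : ∑ e ∈ (s.powersetCard 1).image (insert a), ∏ v ∈ e, x v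
        = x a * ∑ i ∈ s, x i := by
      rw [Finset.sum_image hinj, Finset.powersetCard_one, Finset.sum_map, Finset.mul_sum]
      refine Finset.sum_congr rfl fun i hi => ?_
      simp only [Function.Embedding.coeFn_mk]
      have hai : a ∉ ({i} : Finset (Fin n)) := by
        simp only [Finset.mem_singleton]
        exact fun h => ha (h ▸ hi)
      rw [Finset.prod_insert hai, Finset.prod_singleton]
    rw [Finset.powersetCard_succ_insert ha, Finset.sum_union hdisj, ih, h1,
      Finset.sum_insert ha, Finset.sum_insert ha]
    ring

/-- If x vanishes outside W, lagPoly only sees edges inside W. -/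
private lemma lag_restrict {n : ℕ} (E : Finset (Finset (Fin n))) (W : Finset (Fin n))
    (x : Fin n → ℝ) (hx0 : ∀ v ∉ W, x v = 0) :
    lagPoly E x = ∑ e ∈ E.filter (· ⊆ W), ∏ v ∈ e, x v := by
  unfold lagPoly
  rw [← Finset.sum_filter_add_sum_filter_not E (· ⊆ W)]
  have : ∑ e ∈ E.filter (fun e => ¬ e ⊆ W), ∏ v ∈ e, x v = 0 := by
    refine Finset.sum_eq_zero fun e he => ?_
    obtain ⟨v, hv, hvW⟩ := Finset.not_subset.1 (Finset.mem_filter.1 he).2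
    exact Finset.prod_eq_zero hv (hx0 v hvW)
  rw [this, add_zero]

/-- Shift mass from vertex i to a non-adjacent vertex j without decreasing lagPoly. -/
private lemma shift {n : ℕ} (E : Finset (Finset (Fin n))) (hE : ∀ e ∈ E, e.card = 2)
    {x : Fin n → ℝ} (hx : x ∈ simplexS n) {i j : Fin n} (hij : i ≠ j)
    (hne : ({i, j} : Finset (Fin n)) ∉ E)
    (hAB : ∑ e ∈ E.filter (i ∈ ·), ∏ v ∈ e.erase i, x v ≤
           ∑ e ∈ E.filter (j ∈ ·), ∏ v ∈ e.erase j, x v) :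
    ∃ y ∈ simplexS n, lagPoly E x ≤ lagPoly E y ∧
      (Finset.univ.filter (y · ≠ 0)) ⊆ insert j ((Finset.univ.filter (x · ≠ 0)).erase i) := by
  classical
  set y : Fin n → ℝ := Function.update (Function.update x i 0) j (x i + x j) with hy
  have hyj : y j = x i + x j := Function.update_self _ _ _
  have hyi : y i = 0 := by
    rw [hy, Function.update_of_ne hij, Function.update_self]
  have hyk : ∀ k, k ≠ i → k ≠ j → y k = x k := fun k hki hkj => by
    rw [hy, Function.update_of_ne hkj, Function.update_of_ne hki]
  have hnotboth : ∀ e ∈ E, i ∈ e → j ∈ e → False := by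
    intro e he hie hje
    have h2 : e.card = 2 := hE e he
    have hsub : ({i, j} : Finset (Fin n)) ⊆ e := by
      intro v hv; rcases Finset.mem_insert.1 hv with rfl | hv
      · exact hie
      · exact Finset.mem_singleton.1 hv ▸ hje
    have : ({i, j} : Finset (Fin n)) = e :=
      Finset.eq_of_subset_of_card_le hsub (by rw [h2, Finset.card_pair hij])
    exact hne (this ▸ he)
  -- decomposition of lagPoly
  have key : ∀ z : Fin n → ℝ, lagPoly E z =
      z i * (∑ e ∈ E.filter (i ∈ ·), ∏ v ∈ e.erase i, z v) +
      z j * (∑ e ∈ E.filter (j ∈ ·), ∏ v ∈ e.erase j, z v) +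
      ∑ e ∈ E.filter (fun e => i ∉ e ∧ j ∉ e), ∏ v ∈ e, z v := by
    intro z
    unfold lagPoly
    rw [← Finset.sum_filter_add_sum_filter_not E (i ∈ ·)]
    rw [← Finset.sum_filter_add_sum_filter_not (E.filter (fun e => ¬ i ∈ e)) (j ∈ ·)]
    have e1 : (E.filter (fun e => ¬ i ∈ e)).filter (j ∈ ·) = E.filter (j ∈ ·) := by
      rw [Finset.filter_filter]
      refine Finset.filter_congr fun e he => ?_
      simp only [and_iff_right_iff_imp]
      exact fun hje hie => hnotboth e he hie hje
    have e2 : (E.filter (fun e => ¬ i ∈ e)).filter (fun e => ¬ j ∈ e)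
        = E.filter (fun e => i ∉ e ∧ j ∉ e) := by
      rw [Finset.filter_filter]
    have e3 : ∑ e ∈ E.filter (i ∈ ·), ∏ v ∈ e, z v
        = z i * ∑ e ∈ E.filter (i ∈ ·), ∏ v ∈ e.erase i, z v := by
      rw [Finset.mul_sum]
      refine Finset.sum_congr rfl fun e he => ?_
      exact (Finset.mul_prod_erase e z (Finset.mem_filter.1 he).2).symm
    have e4 : ∑ e ∈ E.filter (j ∈ ·), ∏ v ∈ e, z v
        = z j * ∑ e ∈ E.filter (j ∈ ·), ∏ v ∈ e.erase j, z v := by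
      rw [Finset.mul_sum]
      refine Finset.sum_congr rfl fun e he => ?_
      exact (Finset.mul_prod_erase e z (Finset.mem_filter.1 he).2).symm
    rw [e1, e2, e3, e4]
    ring
  -- the three pieces agree for x and y
  have hA : ∑ e ∈ E.filter (i ∈ ·), ∏ v ∈ e.erase i, y v
      = ∑ e ∈ E.filter (i ∈ ·), ∏ v ∈ e.erase i, x v := by
    refine Finset.sum_congr rfl fun e he => Finset.prod_congr rfl fun v hv => ?_
    obtain ⟨he', hie⟩ := Finset.mem_filter.1 he
    have hvi : v ≠ i := (Finset.mem_erase.1 hv).1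
    have hvj : v ≠ j := fun h =>
      hnotboth e he' hie (h ▸ (Finset.mem_erase.1 hv).2)
    exact hyk v hvi hvj
  have hB : ∑ e ∈ E.filter (j ∈ ·), ∏ v ∈ e.erase j, y v
      = ∑ e ∈ E.filter (j ∈ ·), ∏ v ∈ e.erase j, x v := by
    refine Finset.sum_congr rfl fun e he => Finset.prod_congr rfl fun v hv => ?_
    obtain ⟨he', hje⟩ := Finset.mem_filter.1 he
    have hvj : v ≠ j := (Finset.mem_erase.1 hv).1
    have hvi : v ≠ i := fun h =>
      hnotboth e he' (h ▸ (Finset.mem_erase.1 hv).2) hje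
    exact hyk v hvi hvj
  have hC : ∑ e ∈ E.filter (fun e => i ∉ e ∧ j ∉ e), ∏ v ∈ e, y v
      = ∑ e ∈ E.filter (fun e => i ∉ e ∧ j ∉ e), ∏ v ∈ e, x v := by
    refine Finset.sum_congr rfl fun e he => Finset.prod_congr rfl fun v hv => ?_
    obtain ⟨_, hie, hje⟩ := Finset.mem_filter.1 he
    exact hyk v (fun h => hie (h ▸ hv)) (fun h => hje (h ▸ hv))
  refine ⟨y, ⟨?_, ?_⟩, ?_, ?_⟩
  · -- nonneg
    intro k
    by_cases hkj : k = j
    · rw [hkj, hyj]; exact add_nonneg (hx.1 i) (hx.1 j)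
    by_cases hki : k = i
    · rw [hki, hyi]
    · rw [hyk k hki hkj]; exact hx.1 k
  · -- sum = 1
    have hiu : i ∈ (Finset.univ : Finset (Fin n)).erase j :=
      Finset.mem_erase.2 ⟨hij, Finset.mem_univ i⟩
    have s1 : ∑ k, y k = (x i + x j) + ∑ k ∈ Finset.univ.erase j, Function.update x i 0 k := by
      rw [hy, Finset.sum_update_of_mem (Finset.mem_univ j), Finset.sdiff_singleton_eq_erase]
    have s2 : ∑ k ∈ Finset.univ.erase j, Function.update x i 0 k
        = 0 + ∑ k ∈ (Finset.univ.erase j).erase i, x k := by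
      rw [Finset.sum_update_of_mem hiu, Finset.sdiff_singleton_eq_erase]
    have s3 : x j + ∑ k ∈ Finset.univ.erase j, x k = ∑ k, x k :=
      Finset.add_sum_erase _ x (Finset.mem_univ j)
    have s4 : x i + ∑ k ∈ (Finset.univ.erase j).erase i, x k
        = ∑ k ∈ Finset.univ.erase j, x k :=
      Finset.add_sum_erase _ x hiu
    have hsum : ∑ k, x k = 1 := hx.2
    rw [s1, s2]; linarith
  · -- lagPoly increases
    rw [key x, key y, hA, hB, hC, hyi, hyj]
    have := mul_le_mul_of_nonneg_left hAB (hx.1 i)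
    ring_nf
    nlinarith [this]
  · -- support shrinks
    intro k hk
    have hk' : y k ≠ 0 := (Finset.mem_filter.1 hk).2
    by_cases hkj : k = j
    · subst hkj; exact Finset.mem_insert_self _ _
    by_cases hki : k = i
    · subst hki; exact absurd hyi hk'
    · refine Finset.mem_insert_of_mem (Finset.mem_erase.2 ⟨hki, ?_⟩)
      rw [Finset.mem_filter]
      exact ⟨Finset.mem_univ k, by rwa [← hyk k hki hkj]⟩

/-- Upper bound half of Motzkin–Straus, by induction on support size. -/
private lemma ms_upper {n t : ℕ} (ht : 0 < t) (E : Finset (Finset (Fin n)))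
    (hE : ∀ e ∈ E, e.card = 2)
    (hmax : ∀ W : Finset (Fin n), IsClique2 E W → W.card ≤ t) :
    ∀ m (x : Fin n → ℝ), x ∈ simplexS n →
      (Finset.univ.filter (x · ≠ 0)).card ≤ m →
      lagPoly E x ≤ (1 / 2) * (1 - 1 / (t : ℝ)) := by
  intro m
  induction m with
  | zero =>
    intro x hx hcard
    exfalso
    have hs : (Finset.univ.filter (x · ≠ 0)) = ∅ := Finset.card_eq_zero.1 (Nat.le_zero.1 hcard)
    have : ∑ k, x k = 0 := by
      refine Finset.sum_eq_zero fun k _ => ?_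
      by_contra h
      have hk : k ∈ Finset.univ.filter (x · ≠ 0) :=
        Finset.mem_filter.2 ⟨Finset.mem_univ k, h⟩
      rw [hs] at hk
      exact Finset.notMem_empty k hk
    rw [hx.2] at this; norm_num at this
  | succ m ih =>
    intro x hx hcard
    set s := Finset.univ.filter (x · ≠ 0) with hs
    have hx0 : ∀ v ∉ s, x v = 0 := by
      intro v hv
      by_contra h
      exact hv (Finset.mem_filter.2 ⟨Finset.mem_univ v, h⟩)
    have hsum_s : ∑ k ∈ s, x k = 1 := by
      rw [← hx.2, ← Finset.sum_filter_add_sum_filter_not Finset.univ (x · ≠ 0)]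
      have : ∑ k ∈ Finset.univ.filter (fun k => ¬ x k ≠ 0), x k = 0 :=
        Finset.sum_eq_zero fun k hk => not_not.1 (Finset.mem_filter.1 hk).2
      rw [this, add_zero]
    by_cases hcl : IsClique2 E s
    · -- clique case: direct bound
      have hk : s.card ≤ t := hmax s hcl
      have hk0 : 0 < s.card := by
        rcases Finset.eq_empty_or_nonempty s with h | h
        · rw [h] at hsum_s; simp at hsum_s
        · exact Finset.card_pos.2 h
      have hstep : lagPoly E x ≤ ∑ e ∈ s.powersetCard 2, ∏ v ∈ e, x v := by
        rw [lag_restrict E s x hx0]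
        refine Finset.sum_le_sum_of_subset_of_nonneg ?_ ?_
        · intro e he
          obtain ⟨heE, hes⟩ := Finset.mem_filter.1 he
          exact Finset.mem_powersetCard.2 ⟨hes, hE e heE⟩
        · intro e _ _
          exact Finset.prod_nonneg fun v _ => hx.1 v
      rw [sum_pairs, hsum_s] at hstep
      have hcs : (1 : ℝ) ≤ s.card * ∑ k ∈ s, (x k) ^ 2 := by
        have := sq_sum_le_card_mul_sum_sq (s := s) (f := x)
        rwa [hsum_s, one_pow] at this
      have hkpos : (0 : ℝ) < s.card := by exact_mod_cast hk0
      have htpos : (0 : ℝ) < t := by exact_mod_cast ht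
      have hkt : (s.card : ℝ) ≤ t := by exact_mod_cast hk
      have hQ : (1 : ℝ) / t ≤ ∑ k ∈ s, (x k) ^ 2 := by
        rw [div_le_iff₀ htpos]
        calc (1 : ℝ) ≤ s.card * ∑ k ∈ s, (x k) ^ 2 := hcs
          _ ≤ t * ∑ k ∈ s, (x k) ^ 2 := by
              refine mul_le_mul_of_nonneg_right hkt ?_
              exact Finset.sum_nonneg fun k _ => sq_nonneg _
          _ = (∑ k ∈ s, (x k) ^ 2) * t := mul_comm _ _
      calc lagPoly E x ≤ (1 - ∑ k ∈ s, (x k) ^ 2) / 2 := by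
            simpa using hstep
        _ ≤ (1 / 2) * (1 - 1 / t) := by linarith
    · -- non-clique case: shift mass and use induction
      unfold IsClique2 at hcl
      push_neg at hcl
      obtain ⟨i, hi, j, hj, hij, hne⟩ := hcl
      have main : ∀ i j : Fin n, i ∈ s → j ∈ s → i ≠ j →
          ({i, j} : Finset (Fin n)) ∉ E →
          (∑ e ∈ E.filter (i ∈ ·), ∏ v ∈ e.erase i, x v ≤
           ∑ e ∈ E.filter (j ∈ ·), ∏ v ∈ e.erase j, x v) →
          lagPoly E x ≤ (1 / 2) * (1 - 1 / (t : ℝ)) := by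
        intro i j hi hj hij hne hAB
        obtain ⟨y, hy, hle, hsupp⟩ := shift E hE hx hij hne hAB
        have hins : insert j (s.erase i) = s.erase i :=
          Finset.insert_eq_self.2 (Finset.mem_erase.2 ⟨hij.symm, hj⟩)
        have hcy : (Finset.univ.filter (y · ≠ 0)).card ≤ m := by
          have h1 := Finset.card_le_card (hins ▸ hsupp)
          have h2 : (s.erase i).card = s.card - 1 := Finset.card_erase_of_mem hi
          omega
        exact le_trans hle (ih y hy hcy)
      rcases le_total
          (∑ e ∈ E.filter (i ∈ ·), ∏ v ∈ e.erase i, x v)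
          (∑ e ∈ E.filter (j ∈ ·), ∏ v ∈ e.erase j, x v) with h | h
      · exact main i j hi hj hij hne h
      · exact main j i hj hi hij.symm (by rwa [Finset.pair_comm]) h

theorem motzkin_straus {n t : ℕ} (ht : 0 < t) (E : Finset (Finset (Fin n)))
    (hE : ∀ e ∈ E, e.card = 2)
    (hclique : ∃ W : Finset (Fin n), W.card = t ∧ IsClique2 E W)
    (hmax : ∀ W : Finset (Fin n), IsClique2 E W → W.card ≤ t) :
    IsGreatest (lagPoly E '' simplexS n) ((1 / 2) * (1 - 1 / (t : ℝ))) := by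
  classical
  constructor
  · -- membership : uniform weights on a maximum clique
    obtain ⟨W, hWcard, hWcl⟩ := hclique
    have htpos : (0 : ℝ) < t := by exact_mod_cast ht
    set x : Fin n → ℝ := fun v => if v ∈ W then 1 / t else 0 with hxdef
    have hx0 : ∀ v ∉ W, x v = 0 := fun v hv => if_neg hv
    have hxW : ∀ v ∈ W, x v = 1 / t := fun v hv => if_pos hv
    have hxmem : x ∈ simplexS n := by
      constructor
      · intro k
        simp only [hxdef]
        split
        · positivity
        · exact le_refl 0
      · simp only [hxdef]
        rw [Finset.sum_ite_mem, Finset.univ_inter, Finset.sum_const, hWcard, nsmul_eq_mul]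
        field_simp
    refine ⟨x, hxmem, ?_⟩
    have hfil : E.filter (· ⊆ W) = W.powersetCard 2 := by
      ext e
      simp only [Finset.mem_filter, Finset.mem_powersetCard]
      constructor
      · rintro ⟨heE, hew⟩; exact ⟨hew, hE e heE⟩
      · rintro ⟨hew, hc2⟩
        obtain ⟨a, b, hab, rfl⟩ := Finset.card_eq_two.1 hc2
        exact ⟨hWcl a (hew (Finset.mem_insert_self a _)) b
          (hew (Finset.mem_insert_of_mem (Finset.mem_singleton_self b))) hab, hew⟩
    rw [lag_restrict E W x hx0, hfil, sum_pairs]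
    have h1 : ∑ i ∈ W, x i = 1 := by
      rw [Finset.sum_congr rfl hxW, Finset.sum_const, hWcard, nsmul_eq_mul]
      field_simp
    have h2 : ∑ i ∈ W, (x i) ^ 2 = 1 / t := by
      have : ∀ i ∈ W, (x i) ^ 2 = 1 / (t : ℝ) ^ 2 := fun i hi => by
        rw [hxW i hi]; rw [div_pow, one_pow]
      rw [Finset.sum_congr rfl this, Finset.sum_const, hWcard, nsmul_eq_mul]
      field_simp
    rw [h1, h2]
    ring
  · -- upper bound
    rintro r ⟨x, hx, rfl⟩
    have hcard : (Finset.univ.filter (x · ≠ 0)).card ≤ (Finset.univ.filter (x · ≠ 0)).card :=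
      le_refl _
    exact ms_upper ht E hE hmax _ x hx hcard
end

section
/- Let α > 0 be a constant and let H be a {1,2}-graph (a hypergraph whose edges have size 1 or 2) whose maximum clique (complete {1,2}-subgraph) has order t, with t ≥ α. Then the maximum over the standard simplex of L(H,x) = Σ_{i ∈ E^1} x_i + α Σ_{ij ∈ E^2} x_i x_j equals 1 + α/2 − α/(2t), and this maximum is attained by the characteristic vector of a maximum clique (weight 1/t on each of its t vertices). -/
open Finset

/-- L(H,x) for a {1,2}-graph with 1-edges `E1`, 2-edges `E2` and coefficient `α`. -/
def lag12 {n : ℕ} (α : ℝ) (E1 : Finset (Fin n)) (E2 : Finset (Finset (Fin n)))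
    (x : Fin n → ℝ) : ℝ :=
  (∑ i ∈ E1, x i) + α * ∑ e ∈ E2, ∏ v ∈ e, x v

/-- W spans a complete {1,2}-subgraph. -/
def IsClique12 {n : ℕ} (E1 : Finset (Fin n)) (E2 : Finset (Finset (Fin n)))
    (W : Finset (Fin n)) : Prop :=
  (∀ i ∈ W, i ∈ E1) ∧ ∀ i ∈ W, ∀ j ∈ W, i ≠ j → ({i, j} : Finset (Fin n)) ∈ E2

/-- The characteristic vector of a set `W`. -/
noncomputable def charVec {n : ℕ} (W : Finset (Fin n)) : Fin n → ℝ :=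
  fun i => if i ∈ W then ((W.card : ℝ))⁻¹ else 0

/-!
If two vertices `i`, `j` in the support of `x` do not span a 2-edge, there is no `x_i x_j` term,
so `L(H, ·)` is affine along the segment that moves mass between `x_i` and `x_j`; moving all of it
to one endpoint does not decrease `L` and shrinks the support. So it suffices to treat `x` whose
support is pairwise joined by 2-edges; then `W = supp x ∩ E^1` is a clique, `|W| ≤ t`. With
`s = ∑_{E^1} x_i = ∑_W x_i`, Newton's identity `2 e₂ = p₁² - p₂` and Cauchy–Schwarz
give `∑_{E^2} x_i x_j ≤ (1 - ∑ x_i²) / 2 ≤ (1 - s² / t) / 2`, and `s + α (1 - s² / t) / 2`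
is increasing on `[0, 1]` because `α ≤ t`, so `L(H, x)` is at most its value `1 + α/2 - α/(2t)` at
`s = 1`, which the characteristic vector of a maximum clique attains.
-/

theorem two_mul_sum_powersetCard_two_prod {σ R : Type*} [Fintype σ] [CommRing R] (f : σ → R) :
    2 * ∑ e ∈ univ.powersetCard 2, ∏ k ∈ e, f k = (∑ k, f k) ^ 2 - ∑ k, f k ^ 2 := by
  have h := congrArg (MvPolynomial.eval f) (MvPolynomial.mul_esymm_eq_sum σ R 2)
  simp only [map_mul, map_pow, map_neg, map_one, map_natCast, map_sum, map_prod,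
    MvPolynomial.eval_X, MvPolynomial.esymm, MvPolynomial.psum] at h
  rw [Nat.cast_ofNat] at h
  rw [h, sum_filter, Nat.sum_antidiagonal_succ, Nat.sum_antidiagonal_succ]
  simp [powersetCard_one]
  ring

theorem add_half_mul_one_sub_le {α t s q : ℝ} (hα : 0 ≤ α) (ht : 0 < t) (htα : α ≤ t)
    (hs₁ : s ≤ 1) (hsq : s ^ 2 ≤ t * q) :
    s + α / 2 * (1 - q) ≤ 1 + α / 2 - α / (2 * t) := by
  have hq : s ^ 2 / t ≤ q := (div_le_iff₀ ht).2 (by linarith)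
  have hfactor : 1 + α / 2 - α / (2 * t) - (s + α / 2 * (1 - s ^ 2 / t))
      = (1 - s) * (2 * t - α * (1 + s)) / (2 * t) := by
    field_simp
    ring
  have : 0 ≤ (1 - s) * (2 * t - α * (1 + s)) / (2 * t) := by
    apply div_nonneg _ (by positivity)
    exact mul_nonneg (by linarith) (by nlinarith)
  nlinarith

section

variable {n : ℕ}

def transfer (x : Fin n → ℝ) (i j : Fin n) (s : ℝ) : Fin n → ℝ :=
  x + s • (Pi.single i 1 - Pi.single j 1)

lemma transfer_apply (x : Fin n → ℝ) (i j k : Fin n) (s : ℝ) :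
    transfer x i j s k = x k + s * ((if k = i then 1 else 0) - if k = j then 1 else 0) := by
  simp [transfer, Pi.single_apply]

lemma transfer_mem_simplexS {x : Fin n → ℝ} {i j : Fin n} {s : ℝ} (hx : x ∈ simplexS n)
    (hij : i ≠ j) (hi : -x i ≤ s) (hj : s ≤ x j) : transfer x i j s ∈ simplexS n := by
  refine ⟨fun k => ?_, ?_⟩
  · rw [transfer_apply]
    have := hx.1 k
    split_ifs with hki hkj hkj <;> subst_vars <;> first | exact absurd rfl hij | linarith
  · simp [transfer, sum_add_distrib, ← mul_sum, sum_sub_distrib, hx.2]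

lemma exists_prod_transfer_eq (x : Fin n → ℝ) {i j : Fin n} {e : Finset (Fin n)}
    (he : #e = 2) (hne : e ≠ {i, j}) :
    ∃ D, ∀ s, ∏ k ∈ e, transfer x i j s k = ∏ k ∈ e, x k + s * D := by
  obtain ⟨a, b, hab, rfl⟩ := card_eq_two.1 he
  set d : Fin n → ℝ := fun k => (if k = i then 1 else 0) - if k = j then 1 else 0
  have hd : d a * d b = 0 := by
    simp only [d]
    split_ifs <;> subst_vars <;> simp_all [pair_comm]
  refine ⟨x a * d b + d a * x b, fun s => ?_⟩
  rw [prod_pair hab, prod_pair hab, transfer_apply, transfer_apply]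
  linear_combination s ^ 2 * hd

lemma exists_lag12_transfer_eq (α : ℝ) (E1 : Finset (Fin n)) {E2 : Finset (Finset (Fin n))}
    (hE2 : ∀ e ∈ E2, #e = 2) (x : Fin n → ℝ) {i j : Fin n} (hne : {i, j} ∉ E2) :
    ∃ D, ∀ s, lag12 α E1 E2 (transfer x i j s) = lag12 α E1 E2 x + s * D := by
  choose! D hD using fun e he =>
    exists_prod_transfer_eq x (hE2 e he) (ne_of_mem_of_not_mem he hne)
  refine ⟨∑ k ∈ E1, ((if k = i then 1 else 0) - if k = j then 1 else 0) + α * ∑ e ∈ E2, D e,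
    fun s => ?_⟩
  rw [lag12, lag12, sum_congr rfl fun e he => hD e he s]
  simp only [transfer_apply, sum_add_distrib, ← mul_sum]
  ring

lemma card_support_transfer_lt {x : Fin n → ℝ} {i j : Fin n} {s : ℝ}
    (hxi : x i ≠ 0) (hxj : x j ≠ 0) (hs : transfer x i j s i = 0 ∨ transfer x i j s j = 0) :
    #{k | transfer x i j s k ≠ 0} < #{k | x k ≠ 0} := by
  refine card_lt_card ((ssubset_iff_of_subset fun k hk => ?_).2 ?_)
  · simp only [mem_filter, mem_univ, true_and] at hk ⊢
    by_cases hki : k = i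
    · exact hki ▸ hxi
    by_cases hkj : k = j
    · exact hkj ▸ hxj
    simpa [transfer_apply, hki, hkj] using hk
  · rcases hs with hs | hs
    · exact ⟨i, by simp [hxi], by simp [hs]⟩
    · exact ⟨j, by simp [hxj], by simp [hs]⟩

lemma exists_lag12_le_of_pair_notMem (α : ℝ) (E1 : Finset (Fin n))
    {E2 : Finset (Finset (Fin n))} (hE2 : ∀ e ∈ E2, #e = 2) {x : Fin n → ℝ}
    (hx : x ∈ simplexS n) {i j : Fin n} (hij : i ≠ j) (hne : {i, j} ∉ E2)
    (hxi : x i ≠ 0) (hxj : x j ≠ 0) :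
    ∃ y ∈ simplexS n,
      lag12 α E1 E2 x ≤ lag12 α E1 E2 y ∧ #{k | y k ≠ 0} < #{k | x k ≠ 0} := by
  obtain ⟨D, hD⟩ := exists_lag12_transfer_eq α E1 hE2 x hne
  have hxi₀ := hx.1 i
  have hxj₀ := hx.1 j
  rcases le_total 0 D with hD₀ | hD₀
  · refine ⟨transfer x i j (x j), transfer_mem_simplexS hx hij (by linarith) le_rfl, ?_,
      card_support_transfer_lt hxi hxj (.inr ?_)⟩
    · rw [hD]; nlinarith
    · simp [transfer_apply, hij.symm]
  · refine ⟨transfer x i j (-x i), transfer_mem_simplexS hx hij le_rfl (by linarith), ?_,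
      card_support_transfer_lt hxi hxj (.inl ?_)⟩
    · rw [hD]; nlinarith
    · simp [transfer_apply, hij]

lemma charVec_mem_simplexS {W : Finset (Fin n)} (hW : W.Nonempty) :
    charVec W ∈ simplexS n := by
  refine ⟨fun i => ?_, ?_⟩
  · unfold charVec
    split_ifs <;> positivity
  · simp [charVec, sum_ite_mem, hW.card_pos.ne']

variable {E1 : Finset (Fin n)} {E2 : Finset (Finset (Fin n))}

lemma lag12_le_sum_add_half_mul {α : ℝ} (hα : 0 ≤ α) (hE2 : ∀ e ∈ E2, #e = 2)
    {x : Fin n → ℝ} (hx : x ∈ simplexS n) :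
    lag12 α E1 E2 x ≤ ∑ k ∈ E1, x k + α / 2 * (1 - ∑ k, x k ^ 2) := by
  have hsub : ∑ e ∈ E2, ∏ k ∈ e, x k ≤ ∑ e ∈ univ.powersetCard 2, ∏ k ∈ e, x k :=
    sum_le_sum_of_subset_of_nonneg (fun e he => mem_powersetCard.2 ⟨subset_univ e, hE2 e he⟩)
      fun e _ _ => prod_nonneg fun k _ => hx.1 k
  have h2 := two_mul_sum_powersetCard_two_prod x
  rw [hx.2] at h2
  unfold lag12
  nlinarith

lemma lag12_le_of_support_pairwise_mem {α : ℝ} {t : ℕ} (hα : 0 ≤ α) (ht : 0 < t)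
    (htα : α ≤ t) (hE2 : ∀ e ∈ E2, #e = 2)
    (hmax : ∀ W : Finset (Fin n), IsClique12 E1 E2 W → W.card ≤ t)
    {x : Fin n → ℝ} (hx : x ∈ simplexS n)
    (hadj : ∀ i j, x i ≠ 0 → x j ≠ 0 → i ≠ j → {i, j} ∈ E2) :
    lag12 α E1 E2 x ≤ 1 + α / 2 - α / (2 * t) := by
  set W : Finset (Fin n) := {k ∈ E1 | x k ≠ 0}
  have hW : IsClique12 E1 E2 W := ⟨fun i hi => (mem_filter.1 hi).1,
    fun i hi j hj hij => hadj i j (mem_filter.1 hi).2 (mem_filter.1 hj).2 hij⟩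
  have hs₁ : ∑ k ∈ W, x k ≤ 1 :=
    (sum_le_sum_of_subset_of_nonneg (subset_univ W) fun k _ _ => hx.1 k).trans_eq hx.2
  have hsq : (∑ k ∈ W, x k) ^ 2 ≤ t * ∑ k, x k ^ 2 := calc
    _ ≤ #W * ∑ k ∈ W, x k ^ 2 := sq_sum_le_card_mul_sum_sq
    _ ≤ t * ∑ k, x k ^ 2 := by
      gcongr
      · exact_mod_cast hmax W hW
      · exact subset_univ W
  calc lag12 α E1 E2 x ≤ ∑ k ∈ E1, x k + α / 2 * (1 - ∑ k, x k ^ 2) :=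
        lag12_le_sum_add_half_mul hα hE2 hx
    _ ≤ _ := by
      rw [← sum_filter_ne_zero]
      exact add_half_mul_one_sub_le hα (by exact_mod_cast ht) htα hs₁ hsq

theorem lag12_le_of_mem_simplexS {α : ℝ} {t : ℕ} (hα : 0 ≤ α) (ht : 0 < t)
    (htα : α ≤ t) (hE2 : ∀ e ∈ E2, #e = 2)
    (hmax : ∀ W : Finset (Fin n), IsClique12 E1 E2 W → W.card ≤ t)
    {x : Fin n → ℝ} (hx : x ∈ simplexS n) :
    lag12 α E1 E2 x ≤ 1 + α / 2 - α / (2 * t) := by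
  induction hm : #{k | x k ≠ 0} using Nat.strong_induction_on generalizing x with
  | _ m ih =>
  by_cases hadj : ∀ i j, x i ≠ 0 → x j ≠ 0 → i ≠ j → {i, j} ∈ E2
  · exact lag12_le_of_support_pairwise_mem hα ht htα hE2 hmax hx hadj
  · push Not at hadj
    obtain ⟨i, j, hxi, hxj, hij, hne⟩ := hadj
    obtain ⟨y, hy, hxy, hlt⟩ := exists_lag12_le_of_pair_notMem α E1 hE2 hx hij hne hxi hxj
    exact hxy.trans (ih _ (hm ▸ hlt) hy rfl)

theorem lag12_charVec (α : ℝ) (hE2 : ∀ e ∈ E2, #e = 2) {W : Finset (Fin n)}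
    (hW : IsClique12 E1 E2 W) (hne : W.Nonempty) :
    lag12 α E1 E2 (charVec W) = 1 + α / 2 - α / (2 * W.card) := by
  have hc := charVec_mem_simplexS hne
  have hE1 : ∑ k ∈ E1, charVec W k = 1 :=
    hc.2 ▸ sum_subset (subset_univ E1) fun k _ hk => if_neg fun hkW => hk (hW.1 k hkW)
  have hE2' : ∑ e ∈ E2, ∏ k ∈ e, charVec W k
      = ∑ e ∈ univ.powersetCard 2, ∏ k ∈ e, charVec W k := by
    refine sum_subset (fun e he => mem_powersetCard.2 ⟨subset_univ e, hE2 e he⟩)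
      fun e he heE2 => ?_
    obtain ⟨a, b, hab, rfl⟩ := card_eq_two.1 (mem_powersetCard.1 he).2
    have : ¬(a ∈ W ∧ b ∈ W) := fun h => heE2 (hW.2 a h.1 b h.2 hab)
    simp only [charVec, prod_pair hab]
    split_ifs <;> simp_all
  have hsq : ∑ k, charVec W k ^ 2 = (W.card : ℝ)⁻¹ := by
    have : (W.card : ℝ) ≠ 0 := by exact_mod_cast hne.card_pos.ne'
    simp [charVec, sum_ite_mem]
    field_simp
  have h2 := two_mul_sum_powersetCard_two_prod (charVec W)
  rw [hc.2, hsq] at h2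
  rw [lag12, hE1, hE2']
  linear_combination α / 2 * h2

end

theorem motzkin_straus_one_two (α : ℝ) (hα : 0 < α) {n t : ℕ}
    (E1 : Finset (Fin n)) (E2 : Finset (Finset (Fin n)))
    (hE2 : ∀ e ∈ E2, e.card = 2)
    (hex : ∃ W : Finset (Fin n), W.card = t ∧ IsClique12 E1 E2 W)
    (hmax : ∀ W : Finset (Fin n), IsClique12 E1 E2 W → W.card ≤ t)
    (htα : α ≤ (t : ℝ)) :
    IsGreatest (lag12 α E1 E2 '' simplexS n) (1 + α / 2 - α / (2 * t)) ∧
    ∀ W : Finset (Fin n), W.card = t → IsClique12 E1 E2 W →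
      lag12 α E1 E2 (charVec W) = 1 + α / 2 - α / (2 * t) := by
  have ht : 0 < t := by exact_mod_cast hα.trans_le htα
  have hval (W : Finset (Fin n)) (hWt : W.card = t) (hW : IsClique12 E1 E2 W) :
      lag12 α E1 E2 (charVec W) = 1 + α / 2 - α / (2 * t) := by
    rw [lag12_charVec α hE2 hW (card_pos.1 (hWt ▸ ht)), hWt]
  obtain ⟨W, hWt, hW⟩ := hex
  have hWne : W.Nonempty := card_pos.1 (hWt ▸ ht)
  refine ⟨⟨⟨charVec W, charVec_mem_simplexS hWne, hval W hWt hW⟩, ?_⟩, hval⟩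
  rintro _ ⟨x, hx, rfl⟩
  exact lag12_le_of_mem_simplexS hα.le ht htα hE2 hmax hx
end

section
/- For the complete {1,r}-graph K_t^{{1,r}} on t vertices and constant α > 0, the maximum over the standard simplex of Σ_{i=1}^t x_i + α Σ_{e ∈ [t]^{(r)}} Π_{v∈e} x_v equals 1 + α · Π_{i=1}^{r−1}(t−i) / (r! · t^{r−1}), attained at the uniform weighting x_i = 1/t. -/
open Finset

/-- L(K_t^{1,r}, x) = Σ_i x_i + α Σ_{e ∈ [t]^{(r)}} Π_{v∈e} x_v. -/
def lagComplete1r (t r : ℕ) (α : ℝ) (x : Fin t → ℝ) : ℝ :=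
  (∑ i, x i) + α * ∑ e ∈ (Finset.univ : Finset (Fin t)).powersetCard r, ∏ v ∈ e, x v

/-!
On the simplex `∑ x_i = 1`, so the Lagrangian equals `1 + α e_r(x)` and it suffices that the
elementary symmetric function `e_r` is maximised at the barycentre (a case of Maclaurin's
inequality). For fixed `x_i + x_j` and fixed other coordinates, `e_r` is affine and
non-decreasing in `x_i x_j`, so replacing two unequal coordinates by their mean does not decrease
`e_r`, while it strictly decreases `∑ x_v ^ 2`. Hence a maximiser of `e_r` on the simplex with
least `∑ x_v ^ 2` (both exist by compactness) is constant, i.e. the barycentre.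
-/

namespace Multiset

variable {R : Type*} [CommSemiring R]

@[simp]
theorem esymm_zero (s : Multiset R) : s.esymm 0 = 1 := by
  simp [esymm]

theorem esymm_cons_succ (a : R) (s : Multiset R) (n : ℕ) :
    (a ::ₘ s).esymm (n + 1) = s.esymm (n + 1) + a * s.esymm n := by
  simp [esymm, map_map, sum_map_mul_left]

variable [PartialOrder R] [IsOrderedRing R]

theorem esymm_nonneg {s : Multiset R} (hs : ∀ a ∈ s, 0 ≤ a) (n : ℕ) : 0 ≤ s.esymm n :=
  sum_nonneg fun _ hp => by
    obtain ⟨q, hq, rfl⟩ := mem_map.1 hp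
    exact prod_nonneg fun a ha => hs a (mem_of_le (mem_powersetCard.1 hq).1 ha)

theorem esymm_cons_cons_le {s : Multiset R} (hs : ∀ a ∈ s, 0 ≤ a) {a b c d : R}
    (hsum : a + b = c + d) (hprod : a * b ≤ c * d) :
    ∀ n, (a ::ₘ b ::ₘ s).esymm n ≤ (c ::ₘ d ::ₘ s).esymm n
  | 0 => by simp
  | 1 => le_of_eq <| by
    simp only [esymm_cons_succ, esymm_zero, mul_one]
    rw [add_assoc, add_comm b, hsum]
    ring
  | n + 2 => by
    simp only [esymm_cons_succ]
    calc _ = s.esymm (n + 2) + (a + b) * s.esymm (n + 1) + a * b * s.esymm n := by ring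
      _ ≤ s.esymm (n + 2) + (c + d) * s.esymm (n + 1) + c * d * s.esymm n := by
        rw [hsum]; gcongr; exact esymm_nonneg hs n
      _ = _ := by ring

end Multiset

theorem Nat.cast_choose_div_pow_eq (t r : ℕ) (ht : t ≠ 0) :
    (t.choose r : ℝ) / t ^ r =
      (∏ i ∈ Icc 1 (r - 1), ((t : ℝ) - i)) / (r.factorial * (t : ℝ) ^ (r - 1)) := by
  rcases r with _ | r
  · simp
  have hdesc : (t.descFactorial (r + 1) : ℝ) = t * ∏ i ∈ Icc 1 r, ((t : ℝ) - i) := by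
    rw [← descPochhammer_eval_eq_descFactorial, descPochhammer_eval_eq_prod_range,
      prod_range_succ', mul_comm, ← Finset.Ico_add_one_right_eq_Icc, prod_Ico_eq_prod_range]
    simp [add_comm]
  have hchoose : ((r + 1).factorial : ℝ) * t.choose (r + 1) = t.descFactorial (r + 1) := by
    exact_mod_cast (Nat.descFactorial_eq_factorial_mul_choose t (r + 1)).symm
  have ht' : (t : ℝ) ≠ 0 := Nat.cast_ne_zero.2 ht
  rw [Nat.add_sub_cancel, div_eq_div_iff (by positivity) (by positivity), pow_succ]
  linear_combination (t : ℝ) ^ r * (hchoose.trans hdesc)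

variable {ι : Type*}

section Fintype

variable [Fintype ι]

theorem continuous_esymm_map_univ (n : ℕ) :
    Continuous fun x : ι → ℝ => (univ.val.map x).esymm n := by
  simp only [Finset.esymm_map_val]
  fun_prop

theorem esymm_map_univ_const (c : ℝ) (n : ℕ) :
    (univ.val.map fun _ : ι => c).esymm n = (Fintype.card ι).choose n * c ^ n := by
  rw [Finset.esymm_map_val]
  simp [Finset.sum_powersetCard]

theorem const_inv_card_mem_stdSimplex [Nonempty ι] :
    (fun _ => (Fintype.card ι : ℝ)⁻¹) ∈ stdSimplex ℝ ι :=
  ⟨fun _ => by positivity, by simp⟩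

theorem eq_const_of_mem_stdSimplex {x : ι → ℝ} (hx : x ∈ stdSimplex ℝ ι)
    (hconst : ∀ i j, x i = x j) : x = fun _ => (Fintype.card ι : ℝ)⁻¹ := by
  funext i
  have hcard : (Fintype.card ι : ℝ) * x i = 1 := by
    rw [← hx.2, sum_congr rfl fun j _ => hconst j i, sum_const, card_univ, nsmul_eq_mul]
  rw [eq_inv_of_mul_eq_one_right hcard]

variable [DecidableEq ι]

theorem Finset.map_univ_val_eq_cons_cons {α : Type*} (f : ι → α) {i j : ι} (hij : i ≠ j) :
    univ.val.map f = f i ::ₘ f j ::ₘ ((univ.erase i).erase j).val.map f := by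
  rw [← Multiset.map_cons, ← Multiset.map_cons, erase_val, erase_val,
    Multiset.cons_erase (Multiset.mem_erase_of_ne hij.symm |>.2 (mem_univ j)),
    Multiset.cons_erase (mem_univ i)]

theorem Finset.sum_univ_eq_add_add_sum_erase_erase {M : Type*} [AddCommMonoid M] (f : ι → M)
    {i j : ι} (hij : i ≠ j) : ∑ v, f v = f i + f j + ∑ v ∈ (univ.erase i).erase j, f v := by
  rw [sum_eq_multiset_sum, map_univ_val_eq_cons_cons f hij, Multiset.sum_cons,
    Multiset.sum_cons, sum_eq_multiset_sum, add_assoc]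

end Fintype

section averagePair

variable [DecidableEq ι]

noncomputable def averagePair (x : ι → ℝ) (i j : ι) : ι → ℝ :=
  fun v => if v = i ∨ v = j then (x i + x j) / 2 else x v

variable {x : ι → ℝ} {i j : ι}

@[simp]
theorem averagePair_apply_left : averagePair x i j i = (x i + x j) / 2 := by
  simp [averagePair]

@[simp]
theorem averagePair_apply_right : averagePair x i j j = (x i + x j) / 2 := by
  simp [averagePair]

variable [Fintype ι]

theorem averagePair_eq_on_erase_erase {v : ι} (hv : v ∈ (univ.erase i).erase j) :
    averagePair x i j v = x v := by
  simp only [mem_erase] at hv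
  simp [averagePair, hv.1, hv.2.1]

theorem averagePair_mem_stdSimplex (hx : x ∈ stdSimplex ℝ ι) (hij : i ≠ j) :
    averagePair x i j ∈ stdSimplex ℝ ι := by
  refine ⟨fun v => ?_, ?_⟩
  · unfold averagePair
    split_ifs
    · linarith [hx.1 i, hx.1 j]
    · exact hx.1 v
  · rw [sum_univ_eq_add_add_sum_erase_erase _ hij, sum_congr rfl fun v hv =>
      averagePair_eq_on_erase_erase hv, averagePair_apply_left, averagePair_apply_right,
      ← hx.2, sum_univ_eq_add_add_sum_erase_erase _ hij]
    ring

theorem esymm_le_esymm_averagePair (hx : ∀ v, 0 ≤ x v) (hij : i ≠ j) (n : ℕ) :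
    (univ.val.map x).esymm n ≤ (univ.val.map (averagePair x i j)).esymm n := by
  rw [map_univ_val_eq_cons_cons _ hij, map_univ_val_eq_cons_cons _ hij,
    averagePair_apply_left, averagePair_apply_right,
    Multiset.map_congr rfl fun v hv => averagePair_eq_on_erase_erase hv]
  refine Multiset.esymm_cons_cons_le (by simp [hx]) (by ring) ?_ n
  nlinarith [sq_nonneg (x i - x j)]

theorem sum_sq_averagePair_lt (hij : i ≠ j) (hne : x i ≠ x j) :
    ∑ v, averagePair x i j v ^ 2 < ∑ v, x v ^ 2 := by
  rw [sum_univ_eq_add_add_sum_erase_erase _ hij, sum_univ_eq_add_add_sum_erase_erase _ hij,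
    sum_congr rfl fun v hv => by rw [averagePair_eq_on_erase_erase hv],
    averagePair_apply_left, averagePair_apply_right]
  nlinarith [sq_pos_of_ne_zero (sub_ne_zero.2 hne)]

end averagePair

theorem esymm_le_esymm_const_of_mem_stdSimplex [Fintype ι] {x : ι → ℝ}
    (hx : x ∈ stdSimplex ℝ ι) (n : ℕ) :
    (univ.val.map x).esymm n ≤ (univ.val.map fun _ : ι => (Fintype.card ι : ℝ)⁻¹).esymm n := by
  classical
  set e : (ι → ℝ) → ℝ := fun y => (univ.val.map y).esymm n
  have he : Continuous e := continuous_esymm_map_univ n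
  obtain ⟨x₀, hx₀, hmax⟩ := (isCompact_stdSimplex ℝ ι).exists_isMaxOn ⟨x, hx⟩ he.continuousOn
  set M := stdSimplex ℝ ι ∩ e ⁻¹' {e x₀}
  have hM : IsCompact M :=
    (isCompact_stdSimplex ℝ ι).inter_right (isClosed_eq he continuous_const)
  obtain ⟨z, ⟨hz, hzx₀⟩, hmin⟩ := hM.exists_isMinOn ⟨x₀, hx₀, rfl⟩
    (show Continuous fun y : ι → ℝ => ∑ v, y v ^ 2 by fun_prop).continuousOn
  have hconst : ∀ i j, z i = z j := by
    by_contra! ⟨i, j, hne⟩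
    have hij : i ≠ j := fun h => hne (congrArg z h)
    have hy := averagePair_mem_stdSimplex hz hij
    have hyM : averagePair z i j ∈ M :=
      ⟨hy, le_antisymm (hmax hy) (hzx₀ ▸ esymm_le_esymm_averagePair hz.1 hij n)⟩
    exact (sum_sq_averagePair_lt hij hne).not_ge (hmin hyM)
  calc e x ≤ e x₀ := hmax hx
    _ = e z := hzx₀.symm
    _ = _ := by rw [eq_const_of_mem_stdSimplex hz hconst]

theorem simplexS_eq_stdSimplex (t : ℕ) : simplexS t = stdSimplex ℝ (Fin t) := rfl

theorem lagComplete1r_eq (t r : ℕ) (α : ℝ) (x : Fin t → ℝ) :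
    lagComplete1r t r α x = ∑ i, x i + α * (univ.val.map x).esymm r := by
  rw [lagComplete1r, Finset.esymm_map_val]

theorem lagrangian_complete_one_r (t r : ℕ) (ht : 0 < t) (α : ℝ) (hα : 0 < α) :
    IsGreatest (lagComplete1r t r α '' simplexS t)
      (1 + α * (∏ i ∈ Finset.Icc 1 (r - 1), ((t : ℝ) - i)) /
        ((r.factorial : ℝ) * (t : ℝ) ^ (r - 1))) ∧
    (fun _ : Fin t => (1 : ℝ) / t) ∈ simplexS t ∧
    lagComplete1r t r α (fun _ : Fin t => (1 : ℝ) / t)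
      = 1 + α * (∏ i ∈ Finset.Icc 1 (r - 1), ((t : ℝ) - i)) /
        ((r.factorial : ℝ) * (t : ℝ) ^ (r - 1)) := by
  rw [simplexS_eq_stdSimplex]
  have : Nonempty (Fin t) := ⟨⟨0, ht⟩⟩
  have hu : (fun _ : Fin t => (1 : ℝ) / t) ∈ stdSimplex ℝ (Fin t) := by
    simpa only [one_div, Fintype.card_fin] using const_inv_card_mem_stdSimplex (ι := Fin t)
  have hval : lagComplete1r t r α (fun _ : Fin t => (1 : ℝ) / t)
      = 1 + α * (∏ i ∈ Finset.Icc 1 (r - 1), ((t : ℝ) - i)) /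
        ((r.factorial : ℝ) * (t : ℝ) ^ (r - 1)) := by
    rw [lagComplete1r_eq, hu.2, esymm_map_univ_const, Fintype.card_fin, div_pow, one_pow,
      ← div_eq_mul_one_div, Nat.cast_choose_div_pow_eq t r ht.ne', mul_div_assoc]
  refine ⟨⟨⟨_, hu, hval⟩, ?_⟩, hu, hval⟩
  rintro _ ⟨x, hx, rfl⟩
  rw [← hval, lagComplete1r_eq, lagComplete1r_eq, hx.2, hu.2]
  gcongr
  simpa only [one_div, Fintype.card_fin] using esymm_le_esymm_const_of_mem_stdSimplex hx r
end

section
/- For positive integers m, t, r_1 < r_2 < ... < r_l (each r_i ≥ 2) and positive weights α_1,...,α_l, if Σ_{i=1}^l C(t, r_i) ≤ m ≤ Σ_{i=1}^l C(t, r_i) + Σ_{i=1}^l C(t−1, r_i−1), then the weighted Graph-Lagrangian of the colex hypergraph C_{m, {r_1,...,r_l}} equals that of the complete hypergraph [t]^{{r_1,...,r_l}}. -/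
open Finset

/-- Feasible weightings on vertex set ℕ: nonnegative, finitely supported, summing to 1. -/
def simplexNat : Set (ℕ → ℝ) :=
  {x | (∀ i, 0 ≤ x i) ∧ ∃ n : ℕ, (∑ i ∈ Finset.range n, x i) = 1 ∧ ∀ i, n ≤ i → x i = 0}

/-- Weighted Lagrangian polynomial: edges of cardinality r get weight `α r`. -/
def wLagN (α : ℕ → ℝ) (E : Finset (Finset ℕ)) (x : ℕ → ℝ) : ℝ :=
  ∑ e ∈ E, α e.card * ∏ v ∈ e, x v

/-- A <_colex B : the maximum of the symmetric difference lies in B. -/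
def ColexLt (A B : Finset ℕ) : Prop :=
  ∃ k, k ∈ B ∧ k ∉ A ∧ ∀ j, k < j → (j ∈ A ↔ j ∈ B)

/-- `E` consists of the first `|E|` sets with cardinalities in `T` in colex order. -/
def IsColexInitial (T : Finset ℕ) (E : Finset (Finset ℕ)) : Prop :=
  (∀ e ∈ E, e.card ∈ T) ∧ ∀ A B : Finset ℕ, B ∈ E → A.card ∈ T → ColexLt A B → A ∈ E

/-!
Colex initial segments with sizes in `T` are nested, so comparing cardinalities shows that `C`
contains `[t]^T` (the sets of sizes in `T` inside `range t`) and is contained in the colex segment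
`[t]^T ∪ {S ∪ {t} : S ⊆ range (t - 1)}`. Hence every edge of `C` outside `[t]^T` contains `t` but
not `t - 1`, and replacing `t` by `t - 1` maps these edges injectively into `[t]^T`. Moving the
weight of `t` onto `t - 1` therefore does not decrease the Lagrangian of `C`, and afterwards only
the edges of `[t]^T` carry weight.
-/

open Finset.Colex

lemma colexLt_iff_toColex_lt {A B : Finset ℕ} : ColexLt A B ↔ toColex A < toColex B := by
  simp [ColexLt, lt_iff_exists_filter_lt, filter_inj, and_assoc]

lemma ColexLt.subset_range {A B : Finset ℕ} {n : ℕ} (h : ColexLt A B) (hB : B ⊆ range n) :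
    A ⊆ range n := fun a ha => mem_range.2 <|
  forall_lt_mono (colexLt_iff_toColex_lt.1 h).le (fun _ hb => mem_range.1 (hB hb)) a ha

namespace IsColexInitial

lemma total {T : Finset ℕ} {C F : Finset (Finset ℕ)} (hC : IsColexInitial T C)
    (hF : IsColexInitial T F) : C ⊆ F ∨ F ⊆ C := by
  by_contra! h
  obtain ⟨⟨A, hAC, hAF⟩, B, hBF, hBC⟩ := And.intro (not_subset.1 h.1) (not_subset.1 h.2)
  rcases lt_trichotomy (toColex A) (toColex B) with hAB | hAB | hAB
  · exact hAF (hF.2 A B hBF (hC.1 A hAC) (colexLt_iff_toColex_lt.2 hAB))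
  · exact hBC (toColex.injective hAB ▸ hAC)
  · exact hBC (hC.2 B A hAC (hF.1 B hBF) (colexLt_iff_toColex_lt.2 hAB))

lemma subset_of_card_le {T : Finset ℕ} {C F : Finset (Finset ℕ)} (hC : IsColexInitial T C)
    (hF : IsColexInitial T F) (h : C.card ≤ F.card) : C ⊆ F :=
  (hC.total hF).elim id fun hFC => (eq_of_subset_of_card_le hFC h).symm.subset

end IsColexInitial

lemma card_filter_card_add_mem_powerset (s T : Finset ℕ) (k : ℕ) (hT : ∀ r ∈ T, k ≤ r) :
    (s.powerset.filter (fun S => S.card + k ∈ T)).card = ∑ r ∈ T, s.card.choose (r - k) := by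
  have hmaps : Set.MapsTo (fun S : Finset ℕ => S.card + k)
      ↑(s.powerset.filter fun S => S.card + k ∈ T) ↑T := fun S hS => (mem_filter.1 hS).2
  rw [card_eq_sum_card_fiberwise hmaps]
  refine sum_congr rfl fun r hr => ?_
  rw [← card_powersetCard]
  congr 1
  ext S
  simp only [mem_filter, mem_powerset, mem_powersetCard]
  have := hT r hr
  constructor
  · rintro ⟨⟨hS, -⟩, rfl⟩; exact ⟨hS, by omega⟩
  · rintro ⟨hS, hcard⟩
    have hr' : S.card + k = r := by omega
    exact ⟨⟨hS, hr' ▸ hr⟩, hr'⟩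

def completeFamily (T s : Finset ℕ) : Finset (Finset ℕ) :=
  s.powerset.filter (fun e => e.card ∈ T)

@[simp]
lemma mem_completeFamily {T s e : Finset ℕ} : e ∈ completeFamily T s ↔ e ⊆ s ∧ e.card ∈ T := by
  simp [completeFamily]

lemma card_completeFamily (T s : Finset ℕ) :
    (completeFamily T s).card = ∑ r ∈ T, s.card.choose r := by
  simpa [completeFamily] using card_filter_card_add_mem_powerset s T 0 (fun r _ => r.zero_le)

lemma isColexInitial_completeFamily (T : Finset ℕ) (n : ℕ) :
    IsColexInitial T (completeFamily T (range n)) :=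
  ⟨fun _ he => (mem_completeFamily.1 he).2, fun _ _ hB hA hAB =>
    mem_completeFamily.2 ⟨hAB.subset_range (mem_completeFamily.1 hB).1, hA⟩⟩

/-- The first `∑ r ∈ T, (C(n+1, r) + C(n, r-1))` sets with sizes in `T` in colex order. -/
def extendedComplete (T : Finset ℕ) (n : ℕ) : Finset (Finset ℕ) :=
  completeFamily T (range (n + 1)) ∪
    ((range n).powerset.filter (fun S => S.card + 1 ∈ T)).image (insert (n + 1))

lemma mem_extendedComplete {T e : Finset ℕ} {n : ℕ} :
    e ∈ extendedComplete T n ↔ (e ⊆ range (n + 1) ∧ e.card ∈ T) ∨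
      ∃ S ⊆ range n, S.card + 1 ∈ T ∧ insert (n + 1) S = e := by
  simp [extendedComplete, and_assoc]

lemma add_one_notMem_of_subset_range {S : Finset ℕ} {n : ℕ} (hS : S ⊆ range n) : n + 1 ∉ S :=
  fun h => by simpa using mem_range.1 (hS h)

lemma card_extendedComplete {T : Finset ℕ} (hT : 0 ∉ T) (n : ℕ) :
    (extendedComplete T n).card = ∑ r ∈ T, (n + 1).choose r + ∑ r ∈ T, n.choose (r - 1) := by
  rw [extendedComplete, card_union_of_disjoint, card_image_of_injOn, card_completeFamily,
    card_filter_card_add_mem_powerset _ _ 1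
      (fun r hr => Nat.one_le_iff_ne_zero.2 (ne_of_mem_of_not_mem hr hT)), card_range, card_range]
  · intro S hS S' hS' h
    have hS := add_one_notMem_of_subset_range (mem_powerset.1 (mem_filter.1 hS).1)
    have hS' := add_one_notMem_of_subset_range (mem_powerset.1 (mem_filter.1 hS').1)
    rw [← erase_insert hS, ← erase_insert hS', h]
  · refine disjoint_left.2 fun e he he' => ?_
    obtain ⟨S, -, rfl⟩ := mem_image.1 he'
    simpa using mem_range.1 ((mem_completeFamily.1 he).1 (mem_insert_self _ _))

lemma isColexInitial_extendedComplete (T : Finset ℕ) (n : ℕ) :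
    IsColexInitial T (extendedComplete T n) := by
  refine ⟨fun e he => ?_, fun A B hB hA hAB => ?_⟩
  · rcases mem_extendedComplete.1 he with ⟨-, he⟩ | ⟨S, hS, hcard, rfl⟩
    · exact he
    · rwa [card_insert_of_notMem (add_one_notMem_of_subset_range hS)]
  rcases mem_extendedComplete.1 hB with ⟨hB, -⟩ | ⟨S, hS, -, rfl⟩
  · exact mem_extendedComplete.2 (Or.inl ⟨hAB.subset_range hB, hA⟩)
  have hA2 : A ⊆ range (n + 2) := hAB.subset_range (insert_subset (by simp)
    (hS.trans (range_subset_range.2 (by omega))))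
  by_cases htop : n + 1 ∈ A
  · -- the colex witness lies in `S ⊆ range n`, so `A` agrees with `B` at `n ∉ B`
    have hn : n ∉ A := by
      obtain ⟨k, hkB, hkA, hagree⟩ := hAB
      have hkS : k ∈ S := (mem_insert.1 hkB).resolve_left (by rintro rfl; exact hkA htop)
      intro hnA
      rcases mem_insert.1 ((hagree n (mem_range.1 (hS hkS))).1 hnA) with h | h
      · omega
      · exact absurd (mem_range.1 (hS h)) (lt_irrefl n)
    refine mem_extendedComplete.2 (Or.inr ⟨A.erase (n + 1), fun a ha => ?_, ?_, insert_erase htop⟩)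
    · have := mem_range.1 (hA2 (mem_of_mem_erase ha))
      have := ne_of_mem_erase ha
      have : a ≠ n := by rintro rfl; exact hn (mem_of_mem_erase ha)
      exact mem_range.2 (by omega)
    · rwa [card_erase_add_one htop]
  · refine mem_extendedComplete.2 (Or.inl ⟨fun a ha => ?_, hA⟩)
    have := mem_range.1 (hA2 ha)
    have : a ≠ n + 1 := by rintro rfl; exact htop ha
    exact mem_range.2 (by omega)

noncomputable def lagrangian (α : ℕ → ℝ) (E : Finset (Finset ℕ)) : ℝ :=
  sSup (wLagN α E '' simplexNat)

lemma le_one_of_mem_simplexNat {x : ℕ → ℝ} (hx : x ∈ simplexNat) (v : ℕ) : x v ≤ 1 := by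
  obtain ⟨hpos, n, hsum, hzero⟩ := hx
  rcases lt_or_ge v n with h | h
  · exact hsum ▸ single_le_sum (fun i _ => hpos i) (mem_range.2 h)
  · exact (hzero v h).trans_le zero_le_one

lemma simplexNat_nonempty : simplexNat.Nonempty :=
  ⟨Pi.single 0 1, fun i => by by_cases h : i = 0 <;> simp [h], 1, by simp,
    fun i hi => Pi.single_eq_of_ne (by omega) _⟩

lemma bddAbove_wLagN_image (α : ℕ → ℝ) (E : Finset (Finset ℕ)) :
    BddAbove (wLagN α E '' simplexNat) := by
  refine ⟨∑ e ∈ E, |α e.card|, ?_⟩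
  rintro _ ⟨x, hx, rfl⟩
  refine sum_le_sum fun e _ => ?_
  have h0 : 0 ≤ ∏ v ∈ e, x v := prod_nonneg fun v _ => hx.1 v
  have h1 : ∏ v ∈ e, x v ≤ 1 :=
    prod_le_one (fun v _ => hx.1 v) fun v _ => le_one_of_mem_simplexNat hx v
  calc α e.card * ∏ v ∈ e, x v ≤ |α e.card| * ∏ v ∈ e, x v := by gcongr; exact le_abs_self _
    _ ≤ |α e.card| := mul_le_of_le_one_right (abs_nonneg _) h1

lemma wLagN_le_lagrangian {α : ℕ → ℝ} {E : Finset (Finset ℕ)} {x : ℕ → ℝ} (hx : x ∈ simplexNat) :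
    wLagN α E x ≤ lagrangian α E :=
  le_csSup (bddAbove_wLagN_image α E) ⟨x, hx, rfl⟩

lemma lagrangian_le_of_forall_exists {α : ℕ → ℝ} {E F : Finset (Finset ℕ)}
    (h : ∀ x ∈ simplexNat, ∃ y ∈ simplexNat, wLagN α E x ≤ wLagN α F y) :
    lagrangian α E ≤ lagrangian α F :=
  csSup_le (simplexNat_nonempty.image _) <| by
    rintro _ ⟨x, hx, rfl⟩
    obtain ⟨y, hy, hxy⟩ := h x hx
    exact hxy.trans (wLagN_le_lagrangian hy)

lemma lagrangian_mono {α : ℕ → ℝ} {E F : Finset (Finset ℕ)} (hEF : E ⊆ F)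
    (hα : ∀ e ∈ F, 0 ≤ α e.card) : lagrangian α E ≤ lagrangian α F :=
  lagrangian_le_of_forall_exists fun x hx => ⟨x, hx, sum_le_sum_of_subset_of_nonneg hEF
    fun e he _ => mul_nonneg (hα e he) (prod_nonneg fun v _ => hx.1 v)⟩

def mergeWeight (x : ℕ → ℝ) (u v : ℕ) : ℕ → ℝ :=
  x + Pi.single u (x v) - Pi.single v (x v)

section mergeWeight

variable {x : ℕ → ℝ} {u v i : ℕ}

lemma mergeWeight_apply_left (huv : u ≠ v) : mergeWeight x u v u = x u + x v := by
  simp [mergeWeight, huv]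

lemma mergeWeight_apply_right (huv : u ≠ v) : mergeWeight x u v v = 0 := by
  simp [mergeWeight, huv.symm]

lemma mergeWeight_apply_of_ne (hu : i ≠ u) (hv : i ≠ v) : mergeWeight x u v i = x i := by
  simp [mergeWeight, hu, hv]

lemma le_mergeWeight (hx : ∀ j, 0 ≤ x j) (hv : i ≠ v) : x i ≤ mergeWeight x u v i := by
  by_cases hu : i = u
  · subst hu
    linarith [mergeWeight_apply_left (x := x) hv, hx v]
  · rw [mergeWeight_apply_of_ne hu hv]

lemma mergeWeight_mem_simplexNat (huv : u ≠ v) (hx : x ∈ simplexNat) :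
    mergeWeight x u v ∈ simplexNat := by
  obtain ⟨hpos, n, hsum, hzero⟩ := hx
  refine ⟨fun i => ?_, n + u + v + 1, ?_, fun i hi => ?_⟩
  · by_cases hv : i = v
    · rw [hv, mergeWeight_apply_right huv]
    · exact (hpos i).trans (le_mergeWeight hpos hv)
  · have hext : ∑ i ∈ range (n + u + v + 1), x i = 1 := by
      rw [← hsum]
      exact (sum_subset (range_subset_range.2 (by omega))
        fun i _ hi => hzero i (by simpa using hi)).symm
    simp only [mergeWeight, Pi.add_apply, Pi.sub_apply, sum_add_distrib, sum_sub_distrib,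
      sum_pi_single', hext]
    simp [show u < n + u + v + 1 by omega, show v < n + u + v + 1 by omega]
  · rw [mergeWeight_apply_of_ne (by omega) (by omega)]
    exact hzero i (by omega)

end mergeWeight

/-- The loss on an edge `e` through `v` is exactly the gain on its twin `insert u (e.erase v)`,
and the edges avoiding `v` only gain. -/
theorem wLagN_le_wLagN_mergeWeight {α : ℕ → ℝ} {E : Finset (Finset ℕ)} {x : ℕ → ℝ} {u v : ℕ}
    (huv : u ≠ v) (hα : ∀ e ∈ E, 0 ≤ α e.card) (hx : ∀ i, 0 ≤ x i)
    (hE : ∀ e ∈ E, v ∈ e → u ∉ e ∧ insert u (e.erase v) ∈ E) :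
    wLagN α E x ≤ wLagN α E (mergeWeight x u v) := by
  set y := mergeWeight x u v
  set δ : Finset ℕ → ℝ := fun e => α e.card * (∏ i ∈ e, y i - ∏ i ∈ e, x i)
  set σ : Finset ℕ → Finset ℕ := fun e => insert u (e.erase v)
  have hδ_nonneg : ∀ e ∈ E, v ∉ e → 0 ≤ δ e := fun e he hve =>
    mul_nonneg (hα e he) <| sub_nonneg.2 <| prod_le_prod (fun i _ => hx i)
      fun i hi => le_mergeWeight hx (ne_of_mem_of_not_mem hi hve)
  have hδ_twin : ∀ e, v ∈ e → u ∉ e → δ (σ e) = -δ e := by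
    intro e hve hue
    have hu : u ∉ e.erase v := fun h => hue (mem_of_mem_erase h)
    have hrest : ∏ i ∈ e.erase v, y i = ∏ i ∈ e.erase v, x i := prod_congr rfl fun i hi =>
      mergeWeight_apply_of_ne (ne_of_mem_of_not_mem hi hu) (ne_of_mem_erase hi)
    have hyu : y u = x u + x v := mergeWeight_apply_left huv
    have hyv : y v = 0 := mergeWeight_apply_right huv
    simp only [δ, σ, prod_insert hu, card_insert_of_notMem hu, card_erase_add_one hve,
      ← mul_prod_erase e y hve, ← mul_prod_erase e x hve, hrest, hyu, hyv]
    ring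
  have hσ_inj : Set.InjOn σ ↑(E.filter (v ∈ ·)) := by
    intro e he e' he' h
    have hue := (hE e (mem_filter.1 he).1 (mem_filter.1 he).2).1
    have hue' := (hE e' (mem_filter.1 he').1 (mem_filter.1 he').2).1
    have h' : e.erase v = e'.erase v := by
      simpa [σ, erase_insert fun h => hue (mem_of_mem_erase h),
        erase_insert fun h => hue' (mem_of_mem_erase h)] using congrArg (erase · u) h
    rw [← insert_erase (mem_filter.1 he).2, ← insert_erase (mem_filter.1 he').2, h']
  have hσ_maps : (E.filter (v ∈ ·)).image σ ⊆ E.filter (v ∉ ·) := by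
    intro e' he'
    obtain ⟨e, he, rfl⟩ := mem_image.1 he'
    obtain ⟨heE, hve⟩ := mem_filter.1 he
    exact mem_filter.2 ⟨(hE e heE hve).2, by simp [σ, huv.symm]⟩
  have hsum : 0 ≤ ∑ e ∈ E, δ e := by
    rw [← sum_filter_add_sum_filter_not E (v ∈ ·)]
    calc 0 = ∑ e ∈ E.filter (v ∈ ·), δ e + ∑ e ∈ (E.filter (v ∈ ·)).image σ, δ e := by
          rw [sum_image hσ_inj, ← sum_add_distrib]
          refine (sum_eq_zero fun e he => ?_).symm
          rw [hδ_twin e (mem_filter.1 he).2 (hE e (mem_filter.1 he).1 (mem_filter.1 he).2).1]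
          ring
      _ ≤ ∑ e ∈ E.filter (v ∈ ·), δ e + ∑ e ∈ E.filter (v ∉ ·), δ e := by
          gcongr
          intro e he _
          exact hδ_nonneg e (mem_filter.1 he).1 (mem_filter.1 he).2
  simpa [δ, wLagN, mul_sub, sum_sub_distrib] using hsum

lemma wLagN_filter_notMem {α : ℕ → ℝ} {E : Finset (Finset ℕ)} {y : ℕ → ℝ} {v : ℕ}
    (hy : y v = 0) : wLagN α (E.filter (v ∉ ·)) y = wLagN α E y :=
  sum_filter_of_ne fun e _ hne hve => hne (by rw [prod_eq_zero hve hy, mul_zero])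

lemma lagrangian_le_of_subset_extendedComplete {α : ℕ → ℝ} {T : Finset ℕ} {n : ℕ}
    {C : Finset (Finset ℕ)} (hα : ∀ r ∈ T, 0 ≤ α r)
    (hKC : completeFamily T (range (n + 1)) ⊆ C) (hCF : C ⊆ extendedComplete T n) :
    lagrangian α C ≤ lagrangian α (completeFamily T (range (n + 1))) := by
  have hαC : ∀ e ∈ C, 0 ≤ α e.card :=
    fun e he => hα _ ((isColexInitial_extendedComplete T n).1 e (hCF he))
  have htwin : ∀ e ∈ C, n + 1 ∈ e → n ∉ e ∧ insert n (e.erase (n + 1)) ∈ C := by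
    intro e he hne
    rcases mem_extendedComplete.1 (hCF he) with ⟨hsub, -⟩ | ⟨S, hS, hcard, rfl⟩
    · simpa using mem_range.1 (hsub hne)
    have hnS : n ∉ S := fun h => lt_irrefl n (mem_range.1 (hS h))
    refine ⟨by simpa using hnS, hKC (mem_completeFamily.2 ⟨?_, ?_⟩)⟩
    · rw [erase_insert (add_one_notMem_of_subset_range hS)]
      exact insert_subset (self_mem_range_succ n) (hS.trans (range_subset_range.2 n.le_succ))
    · rwa [erase_insert (add_one_notMem_of_subset_range hS), card_insert_of_notMem hnS]
  have hCK : C.filter (n + 1 ∉ ·) = completeFamily T (range (n + 1)) := by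
    refine Subset.antisymm (fun e he => ?_) fun e he => mem_filter.2 ⟨hKC he, ?_⟩
    · obtain ⟨heC, hne⟩ := mem_filter.1 he
      rcases mem_extendedComplete.1 (hCF heC) with he | ⟨S, -, -, rfl⟩
      · exact mem_completeFamily.2 he
      · exact absurd (mem_insert_self _ _) hne
    · exact fun h => by simpa using mem_range.1 ((mem_completeFamily.1 he).1 h)
  refine lagrangian_le_of_forall_exists fun x hx =>
    ⟨mergeWeight x n (n + 1), mergeWeight_mem_simplexNat (by omega) hx, ?_⟩
  calc wLagN α C x ≤ wLagN α C (mergeWeight x n (n + 1)) :=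
        wLagN_le_wLagN_mergeWeight (by omega) hαC hx.1 htwin
    _ = wLagN α (completeFamily T (range (n + 1))) (mergeWeight x n (n + 1)) := by
        rw [← hCK, wLagN_filter_notMem (mergeWeight_apply_right (by omega))]

theorem colex_lagrangian_eq_complete_general (rs : Finset ℕ)
    (hrs : ∀ r ∈ rs, 2 ≤ r) (α : ℕ → ℝ) (hα : ∀ r ∈ rs, 0 < α r)
    (m t : ℕ) (ht : 0 < t)
    (hm1 : ∑ r ∈ rs, t.choose r ≤ m)
    (hm2 : m ≤ (∑ r ∈ rs, t.choose r) + ∑ r ∈ rs, (t - 1).choose (r - 1))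
    (C : Finset (Finset ℕ)) (hCm : C.card = m) (hC : IsColexInitial rs C) :
    sSup (wLagN α C '' simplexNat)
      = sSup (wLagN α ((Finset.range t).powerset.filter (fun e => e.card ∈ rs))
          '' simplexNat) := by
  obtain ⟨n, rfl⟩ := Nat.exists_eq_add_one_of_ne_zero ht.ne'
  have h0 : 0 ∉ rs := fun h => by simpa using hrs 0 h
  have hα₀ : ∀ r ∈ rs, 0 ≤ α r := fun r hr => (hα r hr).le
  have hKC : completeFamily rs (range (n + 1)) ⊆ C :=
    (isColexInitial_completeFamily rs _).subset_of_card_le hC <| by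
      rwa [card_completeFamily, card_range, hCm]
  have hCF : C ⊆ extendedComplete rs n :=
    hC.subset_of_card_le (isColexInitial_extendedComplete rs n) <| by
      rw [card_extendedComplete h0, hCm]
      simpa using hm2
  exact le_antisymm (lagrangian_le_of_subset_extendedComplete hα₀ hKC hCF)
    (lagrangian_mono hKC fun e he => hα₀ _ (hC.1 e he))

theorem colex_lagrangian_eq_complete {l : ℕ} (rs : Finset ℕ) (hl : rs.card = l)
    (hrs : ∀ r ∈ rs, 2 ≤ r) (α : ℕ → ℝ) (hα : ∀ r ∈ rs, 0 < α r)
    (m t : ℕ) (ht : 0 < t)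
    (hm1 : ∑ r ∈ rs, t.choose r ≤ m)
    (hm2 : m ≤ (∑ r ∈ rs, t.choose r) + ∑ r ∈ rs, (t - 1).choose (r - 1))
    (C : Finset (Finset ℕ)) (hCm : C.card = m) (hC : IsColexInitial rs C) :
    sSup (wLagN α C '' simplexNat)
      = sSup (wLagN α ((Finset.range t).powerset.filter (fun e => e.card ∈ rs))
          '' simplexNat) :=
  colex_lagrangian_eq_complete_general rs hrs α hα m t ht hm1 hm2 C hCm hC
end

section
/- Let H be a hypergraph with edge-type set T on [n] with nonnegative weights α, let x be an optimal weighting of H, and let i < j be vertices. Let H_{i←j} be the hypergraph obtained from H by left-compression from j to i. If x_i ≥ x_j, then L(H, x) ≤ L(H_{i←j}, x). -/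
open Finset

/-- Weighted Lagrangian polynomial: edges of cardinality r get weight `α r`. -/
def wLag {n : ℕ} (α : ℕ → ℝ) (E : Finset (Finset (Fin n))) (x : Fin n → ℝ) : ℝ :=
  ∑ e ∈ E, α e.card * ∏ v ∈ e, x v

/-- The compression C_{i←j}(e) of a single edge. -/
def compEdge {n : ℕ} (i j : Fin n) (e : Finset (Fin n)) : Finset (Fin n) :=
  if i ∉ e ∧ j ∈ e then insert i (e.erase j) else e

/-- The compressed edge set C_{i←j}(E) = {C_{i←j}(e) : e ∈ E} ∪ {e ∈ E : C_{i←j}(e) ∈ E}. -/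
def compSet {n : ℕ} (i j : Fin n) (E : Finset (Finset (Fin n))) : Finset (Finset (Fin n)) :=
  E.image (compEdge i j) ∪ E.filter (fun e => compEdge i j e ∈ E)

theorem compression_does_not_decrease_lagrangian {n : ℕ} (T : Finset ℕ) (α : ℕ → ℝ)
    (hα : ∀ r, 0 ≤ α r) (E : Finset (Finset (Fin n))) (hT : ∀ e ∈ E, e.card ∈ T)
    (x : Fin n → ℝ) (hx : x ∈ simplexS n)
    (hopt : ∀ y ∈ simplexS n, wLag α E y ≤ wLag α E x)
    (i j : Fin n) (hij : i < j) (hxij : x j ≤ x i) :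
    wLag α E x ≤ wLag α (compSet i j E) x := by
  classical
  obtain ⟨hx0, _⟩ := hx
  have hne : i ≠ j := ne_of_lt hij
  set t : Finset (Fin n) → ℝ := fun e => α e.card * ∏ v ∈ e, x v with ht
  have ht0 : ∀ e, 0 ≤ t e := fun e =>
    mul_nonneg (hα _) (Finset.prod_nonneg fun v _ => hx0 v)
  -- compEdge fixes edges not satisfying the condition
  have hfix : ∀ e : Finset (Fin n), ¬(i ∉ e ∧ j ∈ e) → compEdge i j e = e := by
    intro e he; simp [compEdge, he]
  -- compEdge is injective on moved edges
  have hinj : ∀ e : Finset (Fin n), (i ∉ e ∧ j ∈ e) →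
      insert j ((compEdge i j e).erase i) = e := by
    intro e he
    rw [compEdge, if_pos he, Finset.erase_insert (by simp [he.1]),
      Finset.insert_erase he.2]
  -- term comparison on moved edges
  have hmono : ∀ e : Finset (Fin n), (i ∉ e ∧ j ∈ e) → t e ≤ t (compEdge i j e) := by
    intro e he
    have hie : i ∉ e.erase j := by simp [he.1]
    have hcard : (compEdge i j e).card = e.card := by
      rw [compEdge, if_pos he, Finset.card_insert_of_notMem hie,
        Finset.card_erase_add_one he.2]
    have h1 : ∏ v ∈ e, x v = x j * ∏ v ∈ e.erase j, x v :=
      (Finset.mul_prod_erase e x he.2).symm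
    have h2 : ∏ v ∈ compEdge i j e, x v = x i * ∏ v ∈ e.erase j, x v := by
      rw [compEdge, if_pos he, Finset.prod_insert hie]
    simp only [ht, hcard, h1, h2]
    have : x j * ∏ v ∈ e.erase j, x v ≤ x i * ∏ v ∈ e.erase j, x v :=
      mul_le_mul_of_nonneg_right hxij (Finset.prod_nonneg fun v _ => hx0 v)
    exact mul_le_mul_of_nonneg_left this (hα _)
  set P : Finset (Fin n) → Prop := fun e => i ∉ e ∧ j ∈ e with hP
  set A := E.filter (fun e => ¬ P e) with hA
  set Bf := (E.filter P).filter (fun e => compEdge i j e ∈ E) with hBf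
  set Bn := (E.filter P).filter (fun e => compEdge i j e ∉ E) with hBn
  -- E sum decomposition
  have hEsum : wLag α E x = (∑ e ∈ A, t e) + ((∑ e ∈ Bf, t e) + ∑ e ∈ Bn, t e) := by
    rw [wLag, ← Finset.sum_filter_add_sum_filter_not E P t, ← hA,
      ← Finset.sum_filter_add_sum_filter_not (E.filter P) (fun e => compEdge i j e ∈ E) t,
      ← hBf, ← hBn]
    ring
  -- the subset S
  set S := (A ∪ Bf) ∪ Bn.image (compEdge i j) with hS
  have hAE : A ⊆ E := Finset.filter_subset _ _
  have hBfE : Bf ⊆ E := (Finset.filter_subset _ _).trans (Finset.filter_subset _ _)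
  have hBnE : Bn ⊆ E := (Finset.filter_subset _ _).trans (Finset.filter_subset _ _)
  have hSsub : S ⊆ compSet i j E := by
    intro f hf
    rw [hS] at hf
    rcases Finset.mem_union.1 hf with hf | hf
    · rcases Finset.mem_union.1 hf with hf | hf
      · refine Finset.mem_union.2 (Or.inr (Finset.mem_filter.2 ⟨hAE hf, ?_⟩))
        rw [hfix f (Finset.mem_filter.1 hf).2]
        exact hAE hf
      · exact Finset.mem_union.2 (Or.inr (Finset.mem_filter.2
          ⟨hBfE hf, (Finset.mem_filter.1 hf).2⟩))
    · obtain ⟨e, he, rfl⟩ := Finset.mem_image.1 hf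
      exact Finset.mem_union.2 (Or.inl (Finset.mem_image_of_mem _ (hBnE he)))
  -- disjointness
  have hd1 : Disjoint A Bf := by
    rw [Finset.disjoint_left]
    intro e heA heB
    exact (Finset.mem_filter.1 heA).2 (Finset.mem_filter.1 (Finset.mem_filter.1 heB).1).2
  have hd2 : Disjoint (A ∪ Bf) (Bn.image (compEdge i j)) := by
    rw [Finset.disjoint_right]
    intro f hf hfu
    obtain ⟨e, he, rfl⟩ := Finset.mem_image.1 hf
    have : compEdge i j e ∉ E := (Finset.mem_filter.1 he).2
    rcases Finset.mem_union.1 hfu with h | h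
    · exact this (hAE h)
    · exact this (hBfE h)
  have hinjBn : ∀ e ∈ Bn, ∀ e' ∈ Bn, compEdge i j e = compEdge i j e' → e = e' := by
    intro e he e' he' hee
    have hPe : P e := (Finset.mem_filter.1 (Finset.mem_filter.1 he).1).2
    have hPe' : P e' := (Finset.mem_filter.1 (Finset.mem_filter.1 he').1).2
    rw [← hinj e hPe, ← hinj e' hPe', hee]
  have hSsum : ∑ f ∈ S, t f = (∑ e ∈ A, t e) + ((∑ e ∈ Bf, t e)
      + ∑ e ∈ Bn, t (compEdge i j e)) := by
    rw [hS, Finset.sum_union hd2, Finset.sum_union hd1,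
      Finset.sum_image hinjBn]
    ring
  have h1 : wLag α E x ≤ ∑ f ∈ S, t f := by
    rw [hEsum, hSsum]
    gcongr with e he
    exact hmono e (Finset.mem_filter.1 (Finset.mem_filter.1 he).1).2
  refine h1.trans ?_
  exact Finset.sum_le_sum_of_subset_of_nonneg hSsub fun f _ _ => ht0 f
end

section
/- Let H be a left-compressed {1, r_1, ..., r_l}-graph (1 < r_1 < ... < r_l) with positive weights α_1,...,α_l satisfying Σ α_i/(r_i−1)! ≤ 1, and let x be a minimal-support optimal weighting with support {1,...,k}. Then every vertex i with 1 ≤ i ≤ k is a 1-edge of H, i.e. E^1 ⊇ [k]. -/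
open Finset

lemma pow_add_aux : ∀ (m : ℕ) (a S : ℝ), 0 ≤ a → 0 ≤ S →
    S^(m+1) + (m+1)*a*S^m ≤ (a+S)^(m+1) := by
  intro m
  induction m with
  | zero => intro a S ha hS; simp; nlinarith
  | succ m ih =>
    intro a S ha hS
    have h1 := ih a S ha hS
    have h2 : (0:ℝ) ≤ S^m := pow_nonneg hS m
    have h3 : (0:ℝ) ≤ S^(m+1) := pow_nonneg hS (m+1)
    have h5 : (0:ℝ) ≤ a + S := by linarith
    have h6 : (a+S) * (S^(m+1) + (m+1)*a*S^m) ≤ (a+S)^(m+2) := by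
      rw [show (a+S)^(m+2) = (a+S) * (a+S)^(m+1) by ring]
      exact mul_le_mul_of_nonneg_left h1 h5
    have expand : (a+S)*(S^(m+1)+((m:ℝ)+1)*a*S^m)
        = S^(m+1+1) + ((m:ℝ)+1+1)*a*S^(m+1) + ((m:ℝ)+1)*a^2*S^m := by ring
    have hq : (0:ℝ) ≤ ((m:ℝ)+1)*a^2*S^m := by positivity
    push_cast
    push_cast at h6
    linarith [h6, expand, hq]

lemma esymm_le_aux {β : Type*} [DecidableEq β] (x : β → ℝ) (hx : ∀ v, 0 ≤ x v)
    (t : Finset β) : ∀ m : ℕ,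
    (m.factorial : ℝ) * ∑ s ∈ t.powersetCard m, ∏ v ∈ s, x v ≤ (∑ v ∈ t, x v)^m := by
  induction t using Finset.induction with
  | empty =>
    intro m
    cases m with
    | zero => simp
    | succ m =>
      rw [show ((∅: Finset β).powersetCard (m+1)) = ∅ by simp]
      simp
  | @insert a t ha ih =>
    intro m
    cases m with
    | zero => simp
    | succ m =>
      rw [powersetCard_succ_insert ha]
      have hdisj : Disjoint (t.powersetCard (m+1)) ((t.powersetCard m).image (insert a)) := by
        rw [Finset.disjoint_left]
        intro s hs hs'
        rw [mem_image] at hs'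
        obtain ⟨u, hu, rfl⟩ := hs'
        rw [mem_powersetCard] at hs hu
        exact ha (hs.1 (mem_insert_self a u))
      have hinj : ∀ u ∈ t.powersetCard m, ∀ v ∈ t.powersetCard m,
          insert a u = insert a v → u = v := by
        intro u hu v hv huv
        rw [mem_powersetCard] at hu hv
        have hau : a ∉ u := fun h => ha (hu.1 h)
        have hav : a ∉ v := fun h => ha (hv.1 h)
        rw [← erase_insert hau, ← erase_insert hav, huv]
      rw [sum_union hdisj, sum_image hinj]
      have hprod : ∀ u ∈ t.powersetCard m, ∏ v ∈ insert a u, x v = x a * ∏ v ∈ u, x v := by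
        intro u hu
        rw [mem_powersetCard] at hu
        exact prod_insert (fun h => ha (hu.1 h))
      rw [sum_congr rfl hprod, ← mul_sum, sum_insert ha]
      set A := ∑ s ∈ t.powersetCard (m+1), ∏ v ∈ s, x v with hA
      set B := ∑ s ∈ t.powersetCard m, ∏ v ∈ s, x v with hB
      set S := ∑ v ∈ t, x v with hS
      have hSnn : 0 ≤ S := sum_nonneg fun v _ => hx v
      have hBnn : 0 ≤ B := sum_nonneg fun s _ => prod_nonneg fun v _ => hx v
      have hIH1 : ((m+1).factorial : ℝ) * A ≤ S^(m+1) := ih (m+1)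
      have hIH2 : (m.factorial : ℝ) * B ≤ S^m := ih m
      have key := pow_add_aux m (x a) S (hx a) hSnn
      have hfact : (((m+1).factorial : ℕ) : ℝ) = (m+1) * (m.factorial : ℕ) := by
        rw [Nat.factorial_succ]; push_cast; ring
      calc ((m+1).factorial : ℝ) * (A + x a * B)
          = ((m+1).factorial : ℝ) * A + (m+1) * x a * ((m.factorial : ℝ) * B) := by
            rw [hfact]; push_cast; ring
        _ ≤ S^(m+1) + (m+1) * x a * S^m := by
            have : (0:ℝ) ≤ ((m:ℝ)+1) * x a := mul_nonneg (by positivity) (hx a)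
            have h2 := mul_le_mul_of_nonneg_left hIH2 this
            linarith
        _ ≤ (x a + S)^(m+1) := key

/-- L(H,x) for a {1,r_1,...,r_l}-graph. -/
def wLag1 {n : ℕ} (α : ℕ → ℝ) (E1 : Finset (Fin n)) (E : Finset (Finset (Fin n)))
    (x : Fin n → ℝ) : ℝ :=
  (∑ i ∈ E1, x i) + ∑ e ∈ E, α e.card * ∏ v ∈ e, x v

noncomputable def supp {n : ℕ} (x : Fin n → ℝ) : Finset (Fin n) :=
  Finset.univ.filter (fun i => 0 < x i)

theorem support_consists_of_one_edges {n l k : ℕ} (rs : Finset ℕ) (hl : rs.card = l)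
    (hrs : ∀ r ∈ rs, 1 < r) (α : ℕ → ℝ) (hα : ∀ r ∈ rs, 0 < α r)
    (hsum : ∑ r ∈ rs, α r / ((r - 1).factorial : ℝ) ≤ 1)
    (E1 : Finset (Fin n)) (hE1 : E1.Nonempty)
    (E : Finset (Finset (Fin n))) (hE : ∀ e ∈ E, e.card ∈ rs)
    -- H is left-compressed (at every level, including level 1)
    (hlc1 : ∀ i j : Fin n, i < j → j ∈ E1 → i ∈ E1)
    (hlc : ∀ i j : Fin n, i < j → compSet i j E = E)
    (x : Fin n → ℝ) (hx : x ∈ simplexS n)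
    (hopt : ∀ y ∈ simplexS n, wLag1 α E1 E y ≤ wLag1 α E1 E x)
    (hmin : ∀ y ∈ simplexS n, wLag1 α E1 E y = wLag1 α E1 E x →
      (supp x).card ≤ (supp y).card)
    (hsupp : ∀ i : Fin n, 0 < x i ↔ (i : ℕ) < k) :
    ∀ i : Fin n, (i : ℕ) < k → i ∈ E1 := by
  intro i hik
  by_contra hiE1
  obtain ⟨hxnn, hxsum⟩ := hx
  set z : Fin n := ⟨0, i.pos⟩ with hz
  have hzE1 : z ∈ E1 := by
    obtain ⟨j, hj⟩ := hE1
    rcases Nat.eq_zero_or_pos (j : ℕ) with h0 | h0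
    · have : z = j := by apply Fin.ext; simp [hz, h0]
      rwa [this]
    · exact hlc1 z j (by simpa [Fin.lt_def, hz] using h0) hj
  have hiz : i ≠ z := fun h => hiE1 (h ▸ hzE1)
  have hxi : 0 < x i := (hsupp i).mpr hik
  have hk : 0 < k := lt_of_le_of_lt (Nat.zero_le _) hik
  have hxz : 0 < x z := (hsupp z).mpr (by simpa [hz] using hk)
  set y : Fin n → ℝ := fun v => if v = i then 0 else if v = z then x z + x i else x v with hydef
  have hyv : ∀ v, y v = x v + (if v = z then x i else 0) - (if v = i then x i else 0) := by
    intro v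
    by_cases h1 : v = i
    · subst h1; simp [hydef, hiz]
    · by_cases h2 : v = z
      · subst h2; simp [hydef, h1]
      · simp [hydef, h1, h2]
  have hynn : ∀ v, 0 ≤ y v := by
    intro v
    by_cases h1 : v = i
    · subst h1; simp [hydef]
    · by_cases h2 : v = z
      · subst h2; simp [hydef, h1]; positivity
      · simp [hydef, h1, h2]; exact hxnn v
  have hysum : ∑ v, y v = 1 := by
    simp only [hyv]
    rw [Finset.sum_sub_distrib, Finset.sum_add_distrib]
    simp [hxsum]
  have hy_mem : y ∈ simplexS n := ⟨hynn, hysum⟩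
  have hE1sum : ∑ v ∈ E1, y v = (∑ v ∈ E1, x v) + x i := by
    simp only [hyv]
    rw [Finset.sum_sub_distrib, Finset.sum_add_distrib]
    simp [hzE1, hiE1]
  set Ei := E.filter (fun e => i ∈ e) with hEi
  set Ec := E.filter (fun e => ¬ i ∈ e) with hEc
  have hEsplit : ∑ e ∈ E, α e.card * ∏ v ∈ e, x v
      = (∑ e ∈ Ei, α e.card * ∏ v ∈ e, x v) + ∑ e ∈ Ec, α e.card * ∏ v ∈ e, x v :=
    (sum_filter_add_sum_filter_not E _ _).symm
  have hyx : ∀ v, v ≠ i → x v ≤ y v := by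
    intro v hv
    rw [hyv v]
    simp [hv]
    split_ifs <;> linarith
  have hEy : ∑ e ∈ Ec, α e.card * ∏ v ∈ e, x v ≤ ∑ e ∈ E, α e.card * ∏ v ∈ e, y v := by
    rw [← sum_filter_add_sum_filter_not E (fun e => i ∈ e) (fun e => α e.card * ∏ v ∈ e, y v)]
    have h1 : 0 ≤ ∑ e ∈ Ei, α e.card * ∏ v ∈ e, y v :=
      sum_nonneg fun e he => mul_nonneg (le_of_lt (hα _ (hE e (mem_filter.mp he).1)))
        (prod_nonneg fun v _ => hynn v)
    have h2 : ∑ e ∈ Ec, α e.card * ∏ v ∈ e, x v ≤ ∑ e ∈ Ec, α e.card * ∏ v ∈ e, y v := by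
      apply sum_le_sum
      intro e he
      apply mul_le_mul_of_nonneg_left _ (le_of_lt (hα _ (hE e (mem_filter.mp he).1)))
      exact prod_le_prod (fun v _ => hxnn v)
        (fun v hv => hyx v (fun h => (mem_filter.mp he).2 (h ▸ hv)))
    linarith
  have hEi_bound : ∑ e ∈ Ei, α e.card * ∏ v ∈ e, x v ≤ x i := by
    have hmap : ∀ e ∈ Ei, e.card ∈ rs := fun e he => hE e (mem_filter.mp he).1
    rw [← Finset.sum_fiberwise_of_maps_to hmap (fun e => α e.card * ∏ v ∈ e, x v)]
    have inner : ∀ r ∈ rs, ∑ e ∈ Ei.filter (fun e => e.card = r), α e.card * ∏ v ∈ e, x v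
        ≤ α r / ((r - 1).factorial : ℝ) * x i := by
      intro r hr
      set T := Ei.filter (fun e => e.card = r) with hT
      have hcard : ∀ e ∈ T, e.card = r := fun e he => (mem_filter.mp he).2
      have himem : ∀ e ∈ T, i ∈ e := fun e he =>
        (mem_filter.mp (mem_filter.mp he).1).2
      have step1 : ∑ e ∈ T, α e.card * ∏ v ∈ e, x v
          = α r * ∑ e ∈ T, ∏ v ∈ e, x v := by
        rw [mul_sum]
        exact sum_congr rfl fun e he => by rw [hcard e he]
      have step2 : ∑ e ∈ T, ∏ v ∈ e, x v = x i * ∑ e ∈ T, ∏ v ∈ e.erase i, x v := by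
        rw [mul_sum]
        exact sum_congr rfl fun e he => (mul_prod_erase e x (himem e he)).symm
      have hinjT : ∀ e ∈ T, ∀ e' ∈ T, e.erase i = e'.erase i → e = e' := by
        intro e he e' he' h
        rw [← insert_erase (himem e he), ← insert_erase (himem e' he'), h]
      have step3 : ∑ e ∈ T, ∏ v ∈ e.erase i, x v
          = ∑ s ∈ T.image (fun e => e.erase i), ∏ v ∈ s, x v := by
        rw [sum_image hinjT]
      have hsub : T.image (fun e => e.erase i) ⊆ (univ.erase i).powersetCard (r - 1) := by
        intro s hs
        rw [mem_image] at hs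
        obtain ⟨e, he, rfl⟩ := hs
        rw [mem_powersetCard]
        constructor
        · exact erase_subset_erase i (subset_univ e)
        · rw [card_erase_of_mem (himem e he), hcard e he]
      have step4 : ∑ s ∈ T.image (fun e => e.erase i), ∏ v ∈ s, x v
          ≤ ∑ s ∈ (univ.erase i).powersetCard (r - 1), ∏ v ∈ s, x v :=
        sum_le_sum_of_subset_of_nonneg hsub
          (fun s _ _ => prod_nonneg fun v _ => hxnn v)
      have hS1 : ∑ v ∈ (univ : Finset (Fin n)).erase i, x v ≤ 1 := by
        have := add_sum_erase (univ : Finset (Fin n)) x (mem_univ i)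
        rw [hxsum] at this
        linarith
      have hS0 : 0 ≤ ∑ v ∈ (univ : Finset (Fin n)).erase i, x v :=
        sum_nonneg fun v _ => hxnn v
      have step5 : ∑ s ∈ (univ.erase i).powersetCard (r - 1), ∏ v ∈ s, x v
          ≤ 1 / ((r - 1).factorial : ℝ) := by
        have h := esymm_le_aux x hxnn ((univ : Finset (Fin n)).erase i) (r - 1)
        have hpow : (∑ v ∈ (univ : Finset (Fin n)).erase i, x v)^(r-1) ≤ 1 :=
          pow_le_one₀ hS0 hS1
        have hfpos : (0:ℝ) < ((r - 1).factorial : ℝ) := by positivity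
        rw [le_div_iff₀ hfpos]
        calc (∑ s ∈ (univ.erase i).powersetCard (r - 1), ∏ v ∈ s, x v) * ((r - 1).factorial : ℝ)
            = ((r - 1).factorial : ℝ) * ∑ s ∈ (univ.erase i).powersetCard (r - 1), ∏ v ∈ s, x v := by ring
          _ ≤ (∑ v ∈ (univ : Finset (Fin n)).erase i, x v)^(r-1) := h
          _ ≤ 1 := hpow
      have hαr : 0 < α r := hα r hr
      calc ∑ e ∈ T, α e.card * ∏ v ∈ e, x v
          = α r * (x i * ∑ e ∈ T, ∏ v ∈ e.erase i, x v) := by rw [step1, step2]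
        _ ≤ α r * (x i * (1 / ((r - 1).factorial : ℝ))) := by
            apply mul_le_mul_of_nonneg_left _ (le_of_lt hαr)
            apply mul_le_mul_of_nonneg_left _ (le_of_lt hxi)
            rw [step3]
            exact le_trans step4 step5
        _ = α r / ((r - 1).factorial : ℝ) * x i := by ring
    calc ∑ r ∈ rs, ∑ e ∈ Ei.filter (fun e => e.card = r), α e.card * ∏ v ∈ e, x v
        ≤ ∑ r ∈ rs, α r / ((r - 1).factorial : ℝ) * x i := sum_le_sum inner
      _ = (∑ r ∈ rs, α r / ((r - 1).factorial : ℝ)) * x i := by rw [sum_mul]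
      _ ≤ 1 * x i := mul_le_mul_of_nonneg_right hsum (le_of_lt hxi)
      _ = x i := one_mul _
  have hge : wLag1 α E1 E x ≤ wLag1 α E1 E y := by
    unfold wLag1
    rw [hE1sum]
    linarith [hEy, hEi_bound, hEsplit]
  have heq : wLag1 α E1 E y = wLag1 α E1 E x := le_antisymm (hopt y hy_mem) hge
  have hcardle := hmin y hy_mem heq
  have hsubset : supp y ⊆ (supp x).erase i := by
    intro v hv
    rw [supp, mem_filter] at hv
    have hvy : 0 < y v := hv.2
    have hvi : v ≠ i := by
      intro h; subst h; simp [hydef] at hvy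
    rw [mem_erase]
    refine ⟨hvi, ?_⟩
    rw [supp, mem_filter]
    refine ⟨mem_univ v, ?_⟩
    by_cases h2 : v = z
    · subst h2; exact hxz
    · have : y v = x v := by simp [hydef, hvi, h2]
      rwa [← this]
  have hiSupp : i ∈ supp x := by rw [supp, mem_filter]; exact ⟨mem_univ i, hxi⟩
  have hlt : (supp y).card < (supp x).card := by
    calc (supp y).card ≤ ((supp x).erase i).card := card_le_card hsubset
      _ < (supp x).card := card_erase_lt_of_mem hiSupp
  omega
end

section
/- Let H be a left-compressed hypergraph with weights α and let x be a minimal-support solution to the weighted Lagrangian optimization. For i < j both in the support of x: (x_i − x_j)·L(E_{ij}, x) = L(E_{i\j}, x). In particular, if E_{i\j} = ∅ then x_i = x_j. -/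
open Finset

/-- The edges of E_{ij}: edges containing both i and j. -/
def Eij {n : ℕ} (E : Finset (Finset (Fin n))) (i j : Fin n) : Finset (Finset (Fin n)) :=
  E.filter (fun e => i ∈ e ∧ j ∈ e)

/-- L(E_{ij}, x) = Σ_r α_r Σ_{B ∈ E_{ij}^r} Π_{v∈B} x_v. -/
def LEij {n : ℕ} (α : ℕ → ℝ) (E : Finset (Finset (Fin n))) (i j : Fin n)
    (x : Fin n → ℝ) : ℝ :=
  ∑ e ∈ Eij E i j, α e.card * ∏ v ∈ (e.erase i).erase j, x v

/-- The edges of E_{i\j}: edges containing i, not j, whose j-replacement is not an edge. -/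
def Eidiffj {n : ℕ} (E : Finset (Finset (Fin n))) (i j : Fin n) : Finset (Finset (Fin n)) :=
  E.filter (fun e => i ∈ e ∧ j ∉ e ∧ insert j (e.erase i) ∉ E)

/-- L(E_{i\j}, x). -/
def LEidiffj {n : ℕ} (α : ℕ → ℝ) (E : Finset (Finset (Fin n))) (i j : Fin n)
    (x : Fin n → ℝ) : ℝ :=
  ∑ e ∈ Eidiffj E i j, α e.card * ∏ v ∈ e.erase i, x v

lemma compEdge_mem {n : ℕ} {i j : Fin n} {E : Finset (Finset (Fin n))}
    (hlc : compSet i j E = E) {e : Finset (Fin n)} (he : e ∈ E) :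
    compEdge i j e ∈ E := by
  rw [← hlc]
  exact Finset.mem_union_left _ (Finset.mem_image_of_mem _ he)

lemma swap_sum {n : ℕ} (α : ℕ → ℝ) (E : Finset (Finset (Fin n))) (i j : Fin n)
    (hij : i ≠ j) (hlc : compSet i j E = E) (x : Fin n → ℝ) :
    ∑ e ∈ E.filter (fun e => i ∉ e ∧ j ∈ e), α e.card * ∏ v ∈ e.erase j, x v
      = ∑ e ∈ E.filter (fun e => (i ∈ e ∧ j ∉ e) ∧ insert j (e.erase i) ∈ E),
          α e.card * ∏ v ∈ e.erase i, x v := by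
  refine Finset.sum_nbij' (fun e => insert i (e.erase j)) (fun e => insert j (e.erase i))
    ?_ ?_ ?_ ?_ ?_
  · intro e he
    simp only [Finset.mem_filter] at he ⊢
    obtain ⟨heE, hie, hje⟩ := he
    have hinotin : i ∉ e.erase j := fun h => hie (Finset.mem_of_mem_erase h)
    have h1 : compEdge i j e = insert i (e.erase j) := by
      simp [compEdge, hie, hje]
    refine ⟨by rw [← h1]; exact compEdge_mem hlc heE, ⟨Finset.mem_insert_self _ _, ?_⟩, ?_⟩
    · simp [Finset.mem_insert, hij.symm, Finset.mem_erase]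
    · rw [Finset.erase_insert hinotin, Finset.insert_erase hje]
      exact heE
  · intro e he
    simp only [Finset.mem_filter] at he ⊢
    obtain ⟨heE, ⟨hie, hje⟩, hsw⟩ := he
    refine ⟨hsw, ?_, Finset.mem_insert_self _ _⟩
    simp [Finset.mem_insert, hij, Finset.mem_erase]
  · intro e he
    simp only [Finset.mem_filter] at he
    obtain ⟨heE, hie, hje⟩ := he
    have hinotin : i ∉ e.erase j := fun h => hie (Finset.mem_of_mem_erase h)
    show insert j ((insert i (e.erase j)).erase i) = e
    rw [Finset.erase_insert hinotin, Finset.insert_erase hje]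
  · intro e he
    simp only [Finset.mem_filter] at he
    obtain ⟨heE, ⟨hie, hje⟩, hsw⟩ := he
    have hjnotin : j ∉ e.erase i := fun h => hje (Finset.mem_of_mem_erase h)
    show insert i ((insert j (e.erase i)).erase j) = e
    rw [Finset.erase_insert hjnotin, Finset.insert_erase hie]
  · intro e he
    simp only [Finset.mem_filter] at he
    obtain ⟨heE, hie, hje⟩ := he
    have hinotin : i ∉ e.erase j := fun h => hie (Finset.mem_of_mem_erase h)
    have hcard : (insert i (e.erase j)).card = e.card := by
      rw [Finset.card_insert_of_notMem hinotin, Finset.card_erase_of_mem hje]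
      have : 1 ≤ e.card := Finset.card_pos.2 ⟨j, hje⟩
      omega
    rw [hcard, Finset.erase_insert hinotin]

lemma wLag_shift {n : ℕ} (α : ℕ → ℝ) (E : Finset (Finset (Fin n))) (i j : Fin n)
    (hij : i ≠ j) (hlc : compSet i j E = E) (x : Fin n → ℝ) (t : ℝ) :
    wLag α E (Function.update (Function.update x i (x i - t)) j (x j + t))
      = wLag α E x + t * ((x i - x j) * LEij α E i j x - LEidiffj α E i j x)
        - t^2 * LEij α E i j x := by
  set y := Function.update (Function.update x i (x i - t)) j (x j + t) with hy
  have hyi : y i = x i - t := by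
    simp [hy, Function.update_apply, hij]
  have hyj : y j = x j + t := by simp [hy]
  have hyv : ∀ v : Fin n, v ≠ i → v ≠ j → y v = x v := by
    intro v hvi hvj
    simp [hy, Function.update_apply, hvi, hvj]
  -- pointwise decomposition
  set H2 : Finset (Fin n) → ℝ := fun e =>
    if i ∈ e ∧ j ∈ e then α e.card * ∏ v ∈ (e.erase i).erase j, x v else 0 with hH2
  set HI : Finset (Fin n) → ℝ := fun e =>
    if i ∈ e ∧ j ∉ e then α e.card * ∏ v ∈ e.erase i, x v else 0 with hHI
  set HJ : Finset (Fin n) → ℝ := fun e =>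
    if i ∉ e ∧ j ∈ e then α e.card * ∏ v ∈ e.erase j, x v else 0 with hHJ
  have key : ∀ e ∈ E, α e.card * ∏ v ∈ e, y v
      = α e.card * ∏ v ∈ e, x v
        + t * ((x i - x j) * H2 e - HI e + HJ e) - t^2 * H2 e := by
    intro e _
    by_cases hie : i ∈ e <;> by_cases hje : j ∈ e
    · -- both
      have hje' : j ∈ e.erase i := Finset.mem_erase.2 ⟨Ne.symm hij, hje⟩
      have hprody : ∏ v ∈ e, y v
          = (x i - t) * ((x j + t) * ∏ v ∈ (e.erase i).erase j, x v) := by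
        rw [← Finset.mul_prod_erase e y hie, ← Finset.mul_prod_erase _ y hje', hyi, hyj]
        congr 1
        congr 1
        refine Finset.prod_congr rfl ?_
        intro v hv
        have hv1 := Finset.mem_erase.1 hv
        have hv2 := Finset.mem_erase.1 hv1.2
        exact hyv v hv2.1 hv1.1
      have hprodx : ∏ v ∈ e, x v
          = x i * (x j * ∏ v ∈ (e.erase i).erase j, x v) := by
        rw [← Finset.mul_prod_erase e x hie, ← Finset.mul_prod_erase _ x hje']
      simp only [hH2, hHI, hHJ, hie, hje, and_true, true_and, if_pos, if_neg,
        not_true, and_false, false_and, if_false]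
      rw [hprody, hprodx]
      ring
    · -- i only
      have hprody : ∏ v ∈ e, y v = (x i - t) * ∏ v ∈ e.erase i, x v := by
        rw [← Finset.mul_prod_erase e y hie, hyi]
        congr 1
        refine Finset.prod_congr rfl ?_
        intro v hv
        have hv1 := Finset.mem_erase.1 hv
        exact hyv v hv1.1 (fun h => hje (h ▸ hv1.2))
      have hprodx : ∏ v ∈ e, x v = x i * ∏ v ∈ e.erase i, x v := by
        rw [← Finset.mul_prod_erase e x hie]
      simp only [hH2, hHI, hHJ, hie, hje, and_true, true_and, and_false, false_and,
        not_true, not_false_iff, if_true, if_false, if_neg, if_pos]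
      rw [hprody, hprodx]
      ring
    · -- j only
      have hprody : ∏ v ∈ e, y v = (x j + t) * ∏ v ∈ e.erase j, x v := by
        rw [← Finset.mul_prod_erase e y hje, hyj]
        congr 1
        refine Finset.prod_congr rfl ?_
        intro v hv
        have hv1 := Finset.mem_erase.1 hv
        exact hyv v (fun h => hie (h ▸ hv1.2)) hv1.1
      have hprodx : ∏ v ∈ e, x v = x j * ∏ v ∈ e.erase j, x v := by
        rw [← Finset.mul_prod_erase e x hje]
      simp only [hH2, hHI, hHJ, hie, hje, and_true, true_and, and_false, false_and,
        not_true, not_false_iff, if_true, if_false, if_neg, if_pos]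
      rw [hprody, hprodx]
      ring
    · -- neither
      have hprody : ∏ v ∈ e, y v = ∏ v ∈ e, x v := by
        refine Finset.prod_congr rfl ?_
        intro v hv
        exact hyv v (fun h => hie (h ▸ hv)) (fun h => hje (h ▸ hv))
      simp only [hH2, hHI, hHJ, hie, hje, and_true, true_and, and_false, false_and,
        if_false, if_neg, not_false_iff]
      rw [hprody]
      ring
  have hsplit : wLag α E y = wLag α E x
      + t * ((x i - x j) * (∑ e ∈ E, H2 e) - (∑ e ∈ E, HI e) + (∑ e ∈ E, HJ e))
      - t^2 * (∑ e ∈ E, H2 e) := by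
    rw [wLag, Finset.sum_congr rfl key]
    simp only [Finset.sum_sub_distrib, Finset.sum_add_distrib, ← Finset.mul_sum]
    rfl
  have hsum2 : ∑ e ∈ E, H2 e = LEij α E i j x := by
    rw [LEij, Eij, Finset.sum_filter]
  have hsumI : ∑ e ∈ E, HI e
      = (∑ e ∈ E.filter (fun e => (i ∈ e ∧ j ∉ e) ∧ insert j (e.erase i) ∈ E),
          α e.card * ∏ v ∈ e.erase i, x v) + LEidiffj α E i j x := by
    rw [hHI, ← Finset.sum_filter]
    rw [← Finset.sum_filter_add_sum_filter_not (E.filter (fun e => i ∈ e ∧ j ∉ e))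
      (fun e => insert j (e.erase i) ∈ E)]
    congr 1
    · rw [Finset.filter_filter]
    · rw [LEidiffj, Eidiffj, Finset.filter_filter]
      apply Finset.sum_congr _ (fun _ _ => rfl)
      apply Finset.filter_congr
      intro e _
      simp [and_assoc]
  have hsumJ : ∑ e ∈ E, HJ e
      = ∑ e ∈ E.filter (fun e => (i ∈ e ∧ j ∉ e) ∧ insert j (e.erase i) ∈ E),
          α e.card * ∏ v ∈ e.erase i, x v := by
    rw [hHJ, ← Finset.sum_filter]
    exact swap_sum α E i j hij hlc x
  rw [hsplit, hsum2, hsumI, hsumJ]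
  ring

lemma shift_mem_simplex {n : ℕ} {x : Fin n → ℝ} (hx : x ∈ simplexS n) (i j : Fin n)
    (hij : i ≠ j) (t : ℝ) (h1 : 0 ≤ x i - t) (h2 : 0 ≤ x j + t) :
    Function.update (Function.update x i (x i - t)) j (x j + t) ∈ simplexS n := by
  obtain ⟨hpos, hsum⟩ := hx
  constructor
  · intro k
    rcases eq_or_ne k j with rfl | hkj
    · simpa using h2
    rcases eq_or_ne k i with rfl | hki
    · simpa [Function.update_apply, hij, hkj] using h1
    · simpa [Function.update_apply, hki, hkj] using hpos k
  · rw [Finset.sum_update_of_mem (Finset.mem_univ j)]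
    have hi' : i ∈ Finset.univ \ {j} := by simp [hij]
    rw [Finset.sum_update_of_mem hi']
    have e1 : ∑ v ∈ Finset.univ \ {j}, x v = (∑ v, x v) - x j := by
      rw [Finset.sum_sdiff_eq_sub (by simp : ({j} : Finset (Fin n)) ⊆ Finset.univ)]
      simp
    have e2 : ∑ v ∈ (Finset.univ \ {j}) \ {i}, x v
        = (∑ v ∈ Finset.univ \ {j}, x v) - x i := by
      rw [Finset.sum_sdiff_eq_sub (by simpa using hi')]
      simp
    rw [hsum] at e1
    linarith

theorem left_compressed_weight_difference {n : ℕ} (T : Finset ℕ) (α : ℕ → ℝ)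
    (hα : ∀ r ∈ T, 0 ≤ α r) (E : Finset (Finset (Fin n))) (hT : ∀ e ∈ E, e.card ∈ T)
    (hlc : ∀ i j : Fin n, i < j → compSet i j E = E)
    (x : Fin n → ℝ) (hx : x ∈ simplexS n)
    (hopt : ∀ y ∈ simplexS n, wLag α E y ≤ wLag α E x)
    (hmin : ∀ y ∈ simplexS n, wLag α E y = wLag α E x → (supp x).card ≤ (supp y).card)
    (i j : Fin n) (hij : i < j) (hi : i ∈ supp x) (hj : j ∈ supp x) :
    (x i - x j) * LEij α E i j x = LEidiffj α E i j x ∧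
    (Eidiffj E i j = ∅ → x i = x j) := by
  have hij' : i ≠ j := ne_of_lt hij
  have hxi : 0 < x i := by simpa [supp] using hi
  have hxj : 0 < x j := by simpa [supp] using hj
  have hlc' := hlc i j hij
  set C := LEij α E i j x with hC
  set D := LEidiffj α E i j x with hD
  have hC0 : 0 ≤ C := by
    apply Finset.sum_nonneg
    intro e he
    have heE : e ∈ E := (Finset.mem_filter.1 he).1
    exact mul_nonneg (hα _ (hT e heE)) (Finset.prod_nonneg fun v _ => hx.1 v)
  have hineq : ∀ t : ℝ, -x j ≤ t → t ≤ x i →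
      t * ((x i - x j) * C - D) - t ^ 2 * C ≤ 0 := by
    intro t h1 h2
    have hmem := shift_mem_simplex hx i j hij' t (by linarith) (by linarith)
    have hle := hopt _ hmem
    rw [wLag_shift α E i j hij' hlc' x t] at hle
    linarith
  have hB : (x i - x j) * C - D = 0 := by
    set B := (x i - x j) * C - D with hBdef
    rcases lt_trichotomy B 0 with h | h | h
    · exfalso
      set m := min (x j) ((-B) / (C + 1)) with hm
      have hm0 : 0 < m := lt_min hxj (div_pos (by linarith) (by linarith))
      have hmj : m ≤ x j := min_le_left _ _
      have hmle : m ≤ (-B) / (C + 1) := min_le_right _ _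
      have hmc : m * (C + 1) ≤ -B := (le_div_iff₀ (by linarith)).1 hmle
      have h1 := hineq (-m) (by linarith) (by linarith)
      have h2 : -B ≤ m * C := by nlinarith
      nlinarith
    · exact h
    · exfalso
      set m := min (x i) (B / (C + 1)) with hm
      have hm0 : 0 < m := lt_min hxi (div_pos (by linarith) (by linarith))
      have hmi : m ≤ x i := min_le_left _ _
      have hmle : m ≤ B / (C + 1) := min_le_right _ _
      have hmc : m * (C + 1) ≤ B := (le_div_iff₀ (by linarith)).1 hmle
      have h1 := hineq m (by linarith) (by linarith)
      have h2 : B ≤ m * C := by nlinarith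
      nlinarith
  refine ⟨by linarith, ?_⟩
  intro hE0
  have hD0 : D = 0 := by simp [hD, LEidiffj, hE0]
  have hmul : (x i - x j) * C = 0 := by linarith
  rcases hC0.eq_or_lt with hc | hc
  · exfalso
    have hmem := shift_mem_simplex hx i j hij' (x i) (by linarith) (by linarith)
    have heq : wLag α E (Function.update (Function.update x i (x i - x i)) j (x j + x i))
        = wLag α E x := by
      rw [wLag_shift α E i j hij' hlc' x (x i), hB, ← hC, ← hc]
      ring
    have hcard := hmin _ hmem heq
    have hsub : supp (Function.update (Function.update x i (x i - x i)) j (x j + x i))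
        ⊆ (supp x).erase i := by
      intro k hk
      simp only [supp, Finset.mem_filter, Finset.mem_univ, true_and] at hk
      rcases eq_or_ne k i with rfl | hki
      · rw [Function.update_apply, if_neg hij', Function.update_self] at hk
        linarith
      · refine Finset.mem_erase.2 ⟨hki, ?_⟩
        simp only [supp, Finset.mem_filter, Finset.mem_univ, true_and]
        rcases eq_or_ne k j with rfl | hkj
        · exact hxj
        · rwa [Function.update_apply, if_neg hkj, Function.update_apply, if_neg hki] at hk
    have h1 := Finset.card_le_card hsub
    have h2 : ((supp x).erase i).card = (supp x).card - 1 :=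
      Finset.card_erase_of_mem hi
    have h3 : 1 ≤ (supp x).card := Finset.card_pos.2 ⟨i, hi⟩
    omega
  · have := mul_eq_zero.1 hmul
    rcases this with h | h
    · linarith
    · exact absurd h (ne_of_gt hc)
end
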